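/- arXiv:math/0502579 — 5 statements merged into one kernel-verified Lean document; each statement's English description precedes it below -/
import Mathlib

section
/- Let c > 1/2 be fixed and set l = l(k) = ⌊c·k·ln k⌋. Then, as k → ∞, C(k,l) ~ binom(k(k-1)/2, k+l-1), i.e. asymptotically almost all graphs on k vertices with k+l-1 edges are connected. -/
open Filter Topology Real Finset


lemma count_sets (α : Type*) (E : Finset α) (m : ℕ) :
    {s : Set α | s ⊆ ↑E ∧ s.ncard = m}.ncard = E.card.choose m := by
  classical
  have himg : {s : Set α | s ⊆ ↑E ∧ s.ncard = m}
      = (fun F : Finset α => (F : Set α)) '' ((E.powersetCard m : Finset (Finset α)) : Set (Finset α)) := by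
    ext s
    simp only [Set.mem_setOf_eq, Set.mem_image, Finset.mem_coe, Finset.mem_powersetCard]
    constructor
    · rintro ⟨hsub, hcard⟩
      have hfin : s.Finite := (E.finite_toSet).subset hsub
      refine ⟨hfin.toFinset, ⟨?_, ?_⟩, by simp⟩
      · intro x hx; exact hsub (by simpa using hx)
      · rw [← hcard, ← Set.ncard_coe_finset, Set.Finite.coe_toFinset]
    · rintro ⟨F, ⟨hsub, hcard⟩, rfl⟩
      exact ⟨by exact_mod_cast hsub, by simp [Set.ncard_coe_finset, hcard]⟩
  rw [himg, Set.ncard_image_of_injective _ Finset.coe_injective,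
    Set.ncard_coe_finset, Finset.card_powersetCard]

lemma count_graphs (V : Type*) [Fintype V] (E : Finset (Sym2 V))
    (hE : ∀ e ∈ E, ¬ e.IsDiag) (m : ℕ) :
    {G : SimpleGraph V | G.edgeSet ⊆ ↑E ∧ G.edgeSet.ncard = m}.ncard = E.card.choose m := by
  classical
  have himg : SimpleGraph.edgeSet '' {G : SimpleGraph V | G.edgeSet ⊆ ↑E ∧ G.edgeSet.ncard = m}
      = {s : Set (Sym2 V) | s ⊆ ↑E ∧ s.ncard = m} := by
    ext s
    simp only [Set.mem_image, Set.mem_setOf_eq]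
    constructor
    · rintro ⟨G, ⟨h1, h2⟩, rfl⟩; exact ⟨h1, h2⟩
    · rintro ⟨h1, h2⟩
      have hd : s \ {e : Sym2 V | e.IsDiag} = s := by
        ext e
        simp only [Set.mem_diff, Set.mem_setOf_eq, and_iff_left_iff_imp]
        exact fun he => hE e (h1 he)
      refine ⟨SimpleGraph.fromEdgeSet s, ?_, ?_⟩
      · rw [SimpleGraph.edgeSet_fromEdgeSet, show (Sym2.diagSet : Set (Sym2 V)) = {e | e.IsDiag} from rfl, hd]; exact ⟨h1, h2⟩
      · rw [SimpleGraph.edgeSet_fromEdgeSet, show (Sym2.diagSet : Set (Sym2 V)) = {e | e.IsDiag} from rfl, hd]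
  rw [← count_sets (Sym2 V) E m, ← himg,
    Set.ncard_image_of_injective _ SimpleGraph.edgeSet_injective]

variable {V : Type*} [Fintype V] [DecidableEq V]

def crossEdges (S : Finset V) : Finset (Sym2 V) :=
  (S ×ˢ Sᶜ).image (fun p => s(p.1, p.2))

lemma mem_crossEdges {S : Finset V} {e : Sym2 V} :
    e ∈ crossEdges S ↔ ∃ a b, a ∈ S ∧ b ∉ S ∧ e = s(a, b) := by
  simp only [crossEdges, Finset.mem_image, Finset.mem_product, Finset.mem_compl, Prod.exists]
  constructor
  · rintro ⟨a, b, ⟨h1, h2⟩, rfl⟩; exact ⟨a, b, h1, h2, rfl⟩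
  · rintro ⟨a, b, h1, h2, rfl⟩; exact ⟨a, b, ⟨h1, h2⟩, rfl⟩

lemma card_crossEdges (S : Finset V) :
    (crossEdges S).card = S.card * (Fintype.card V - S.card) := by
  rw [crossEdges, Finset.card_image_of_injOn, Finset.card_product, Finset.card_compl]
  intro p hp q hq h
  simp only [Finset.mem_coe, Finset.mem_product, Finset.mem_compl] at hp hq
  rw [Sym2.eq_iff] at h
  rcases h with ⟨h1, h2⟩ | ⟨h1, h2⟩
  · exact Prod.ext h1 h2
  · exact ((h1 ▸ hq.2 : p.1 ∉ S) hp.1).elim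

lemma crossEdges_subset_top (S : Finset V) :
    crossEdges S ⊆ (⊤ : SimpleGraph V).edgeFinset := by
  intro e he
  rw [mem_crossEdges] at he
  obtain ⟨a, b, h1, h2, rfl⟩ := he
  simp [SimpleGraph.mem_edgeFinset]
  exact fun h => h2 (h ▸ h1)

lemma disconnected_structure {G : SimpleGraph V} (hV : Nonempty V)
    (hG : ¬ G.Connected) :
    ∃ S : Finset V, S.Nonempty ∧ 2 * S.card ≤ Fintype.card V ∧
      G.edgeSet ⊆ ↑((⊤ : SimpleGraph V).edgeFinset \ crossEdges S) := by
  have hprec : ¬ G.Preconnected := fun h => hG ⟨h⟩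
  simp only [SimpleGraph.Preconnected, not_forall] at hprec
  obtain ⟨v, w, hvw⟩ := hprec
  classical
  set S0 : Finset V := Finset.univ.filter (fun u => G.Reachable v u) with hS0
  have hvS0 : v ∈ S0 := by simp [hS0]
  have hwS0 : w ∉ S0 := by simp [hS0]; exact hvw
  have hcross0 : ∀ a b, G.Adj a b → a ∈ S0 → b ∈ S0 := by
    intro a b hab ha
    simp only [hS0, Finset.mem_filter, Finset.mem_univ, true_and] at ha ⊢
    exact ha.trans hab.reachable
  have key : ∀ S : Finset V, (∀ a b, G.Adj a b → a ∈ S → b ∈ S) →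
      G.edgeSet ⊆ ↑((⊤ : SimpleGraph V).edgeFinset \ crossEdges S) := by
    intro S hS e he
    induction e with
    | _ x y =>
      have hadj : G.Adj x y := he
      simp only [Finset.coe_sdiff, Set.mem_diff, Finset.mem_coe,
        SimpleGraph.mem_edgeFinset]
      constructor
      · exact fun h => hadj.ne h
      · intro hc
        rw [mem_crossEdges] at hc
        obtain ⟨a, b, ha, hb, hab⟩ := hc
        rw [Sym2.eq_iff] at hab
        rcases hab with ⟨rfl, rfl⟩ | ⟨rfl, rfl⟩
        · exact hb (hS _ _ hadj ha)
        · exact hb (hS _ _ hadj.symm ha)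
  by_cases hle : 2 * S0.card ≤ Fintype.card V
  · exact ⟨S0, ⟨v, hvS0⟩, hle, key S0 hcross0⟩
  · refine ⟨S0ᶜ, ⟨w, by simpa using hwS0⟩, ?_, key S0ᶜ ?_⟩
    · rw [Finset.card_compl]
      omega
    · intro a b hab ha
      simp only [Finset.mem_compl] at ha ⊢
      exact fun hb => ha (hcross0 _ _ hab.symm hb)

lemma ncard_biUnion_le {α β : Type*} (t : Finset α) (f : α → Set β)
    (hf : ∀ a ∈ t, (f a).Finite) :
    (⋃ a ∈ t, f a).ncard ≤ ∑ a ∈ t, (f a).ncard := by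
  classical
  induction t using Finset.induction_on with
  | empty => simp
  | insert a s hx ih =>
    rw [Finset.sum_insert hx]
    have : (⋃ b ∈ insert a s, f b) = f a ∪ ⋃ b ∈ s, f b := by
      simp [Set.iUnion_iUnion_eq_or_left]
    rw [this]
    exact le_trans (Set.ncard_union_le _ _)
      (Nat.add_le_add_left (ih fun b hb => hf b (Finset.mem_insert_of_mem hb)) _)

lemma disc_count_le (hV : Nonempty V) (m : ℕ) :
    {G : SimpleGraph V | ¬ G.Connected ∧ G.edgeSet.ncard = m}.ncard ≤
      ∑ s ∈ Finset.Icc 1 (Fintype.card V / 2),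
        (Fintype.card V).choose s *
          ((Fintype.card V).choose 2 - s * (Fintype.card V - s)).choose m := by
  classical
  set n := Fintype.card V with hn
  set A : Finset V → Set (SimpleGraph V) := fun S =>
    {G : SimpleGraph V | G.edgeSet ⊆ ↑((⊤ : SimpleGraph V).edgeFinset \ crossEdges S)
      ∧ G.edgeSet.ncard = m} with hA
  set 𝒮 : Finset (Finset V) :=
    (Finset.Icc 1 (n / 2)).biUnion (fun s => Finset.univ.powersetCard s) with h𝒮
  have hsub : {G : SimpleGraph V | ¬ G.Connected ∧ G.edgeSet.ncard = m} ⊆ ⋃ S ∈ 𝒮, A S := by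
    rintro G ⟨hG, hm⟩
    obtain ⟨S, hS1, hS2, hS3⟩ := disconnected_structure hV hG
    have hmem : S ∈ 𝒮 := by
      simp only [h𝒮, Finset.mem_biUnion, Finset.mem_Icc, Finset.mem_powersetCard]
      exact ⟨S.card, ⟨hS1.card_pos, by omega⟩, Finset.subset_univ S, rfl⟩
    exact Set.mem_iUnion₂.mpr ⟨S, hmem, ⟨hS3, hm⟩⟩
  have hAcard : ∀ S : Finset V, (A S).ncard = (n.choose 2 - S.card * (n - S.card)).choose m := by
    intro S
    have hEcard : ((⊤ : SimpleGraph V).edgeFinset \ crossEdges S).card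
        = n.choose 2 - S.card * (n - S.card) := by
      rw [Finset.card_sdiff_of_subset (crossEdges_subset_top S), card_crossEdges,
        SimpleGraph.card_edgeFinset_top_eq_card_choose_two]
    rw [hA, ← hEcard]
    refine count_graphs V _ (fun e he => ?_) m
    have h2 := Finset.sdiff_subset he
    rw [SimpleGraph.mem_edgeFinset, SimpleGraph.edgeSet_top] at h2
    exact h2
  calc {G : SimpleGraph V | ¬ G.Connected ∧ G.edgeSet.ncard = m}.ncard
      ≤ (⋃ S ∈ 𝒮, A S).ncard := by
        apply Set.ncard_le_ncard hsub

    _ ≤ ∑ S ∈ 𝒮, (A S).ncard := ncard_biUnion_le _ _ (fun _ _ => Set.toFinite _)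
    _ = ∑ s ∈ Finset.Icc 1 (n / 2), ∑ S ∈ Finset.univ.powersetCard s, (A S).ncard := by
        rw [h𝒮, Finset.sum_biUnion]
        intro a ha b hb hab
        simp only [Function.onFun, Finset.disjoint_left, Finset.mem_powersetCard]
        rintro S ⟨-, h1⟩ ⟨-, h2⟩
        exact hab (h1 ▸ h2.symm ▸ rfl)
    _ = ∑ s ∈ Finset.Icc 1 (n / 2), n.choose s * (n.choose 2 - s * (n - s)).choose m := by
        apply Finset.sum_congr rfl
        intro s hs
        have hterm : ∀ S ∈ Finset.univ.powersetCard s,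
            (A S).ncard = (n.choose 2 - s * (n - s)).choose m := by
          intro S hS
          rw [hAcard S, (Finset.mem_powersetCard.mp hS).2]
        rw [Finset.sum_congr rfl hterm, Finset.sum_const,
          Finset.card_powersetCard, Finset.card_univ, smul_eq_mul]


lemma choose_pred_mul (n m N : ℕ) (hnN : n ≤ N) :
    N * (n - 1).choose m ≤ (N - m) * n.choose m := by
  rcases Nat.lt_or_ge (n - 1) m with h | h
  · rw [Nat.choose_eq_zero_of_lt h, Nat.mul_zero]
    exact Nat.zero_le _
  rcases Nat.eq_zero_or_pos n with rfl | hn1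
  · have hm : m = 0 := by omega
    subst hm
    simp
  -- m ≤ n - 1, so n ≥ 1
  have hmn : m ≤ n := by omega
  have hmN : m ≤ N := hmn.trans hnN
  have hid : n * (n - 1).choose m = (n - m) * n.choose m := by
    have h1 : (n - 1) + 1 = n := by omega
    have h2 := Nat.add_one_mul_choose_eq (n - 1) m
    simp only [Nat.succ_eq_add_one, h1] at h2
    rw [h2, Nat.choose_succ_right_eq, Nat.mul_comm]
  have hkey : N * (n - m) ≤ n * (N - m) := by
    have hmul : n * m ≤ N * m := Nat.mul_le_mul_right m hnN
    zify [hmn, hmN]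
    nlinarith
  have : n * (N * (n - 1).choose m) ≤ n * ((N - m) * n.choose m) := by
    calc n * (N * (n - 1).choose m) = N * (n * (n - 1).choose m) := by ring
      _ = N * ((n - m) * n.choose m) := by rw [hid]
      _ = (N * (n - m)) * n.choose m := by ring
      _ ≤ (n * (N - m)) * n.choose m := Nat.mul_le_mul_right _ hkey
      _ = n * ((N - m) * n.choose m) := by ring
  exact Nat.le_of_mul_le_mul_left this hn1

lemma choose_ratio_nat (N m : ℕ) : ∀ t : ℕ,
    N ^ t * (N - t).choose m ≤ (N - m) ^ t * N.choose m := by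
  intro t
  induction t with
  | zero => simp
  | succ t ih =>
    have h1 : N - (t + 1) = (N - t) - 1 := by omega
    calc N ^ (t + 1) * (N - (t + 1)).choose m
        = N ^ t * (N * ((N - t) - 1).choose m) := by rw [h1]; ring
      _ ≤ N ^ t * ((N - m) * (N - t).choose m) :=
          Nat.mul_le_mul_left _ (choose_pred_mul (N - t) m N (Nat.sub_le _ _))
      _ = (N - m) * (N ^ t * (N - t).choose m) := by ring
      _ ≤ (N - m) * ((N - m) ^ t * N.choose m) := Nat.mul_le_mul_left _ ih
      _ = (N - m) ^ (t + 1) * N.choose m := by ring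

lemma choose_ratio_real (N m t : ℕ) (hN : 0 < N) :
    ((N - t).choose m : ℝ) ≤ (((N - m : ℕ) : ℝ) / N) ^ t * N.choose m := by
  have h := choose_ratio_nat N m t
  have hcast : ((N:ℝ)) ^ t * ((N - t).choose m : ℝ) ≤ ((N - m : ℕ) : ℝ) ^ t * (N.choose m : ℝ) := by
    exact_mod_cast h
  have hNpos : (0:ℝ) < (N:ℝ) ^ t := by positivity
  rw [div_pow, div_mul_eq_mul_div, le_div_iff₀ hNpos]
  linarith [hcast]


lemma geom_tail_le {r : ℝ} (h1 : 0 ≤ r) (h2 : r < 1) (M : ℕ) :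
    ∑ s ∈ Finset.Icc 1 M, r ^ s ≤ r / (1 - r) := by
  have heq : ∑ s ∈ Finset.Icc 1 M, r ^ s = r * ∑ i ∈ Finset.range M, r ^ i := by
    rw [Finset.mul_sum, ← Finset.Ico_add_one_right_eq_Icc, Finset.sum_Ico_eq_sum_range]
    simp [pow_succ, pow_add, mul_comm, pow_one]
  rw [heq, div_eq_mul_inv]
  apply mul_le_mul_of_nonneg_left _ h1
  exact Summable.sum_le_tsum _ (fun i _ => pow_nonneg h1 i)
    (summable_geometric_of_lt_one h1 h2) |>.trans_eq (tsum_geometric_of_lt_one h1 h2)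

lemma choose_le_exp (k s : ℕ) (hs : 1 ≤ s) :
    (k.choose s : ℝ) ≤ Real.exp (s * (1 + Real.log k - Real.log s)) := by
  have hspos : (0:ℝ) < s := by exact_mod_cast hs
  rcases Nat.eq_zero_or_pos k with rfl | hk
  · simp only [Nat.choose_eq_zero_of_lt hs, Nat.cast_zero]
    positivity
  have hkpos : (0:ℝ) < k := by exact_mod_cast hk
  have h1 : (k.choose s : ℝ) ≤ (k:ℝ) ^ s / (Nat.factorial s : ℝ) :=
    Nat.choose_le_pow_div s k
  have h2 : (s:ℝ) ^ s / (Nat.factorial s : ℝ) ≤ Real.exp s :=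
    Real.pow_div_factorial_le_exp (s:ℝ) hspos.le s
  have hfac : (0:ℝ) < (Nat.factorial s : ℝ) := by exact_mod_cast Nat.factorial_pos s
  have e1 : (k:ℝ) ^ s = Real.exp (s * Real.log k) := by
    rw [← Real.rpow_natCast, Real.rpow_def_of_pos hkpos, mul_comm]
  have e2 : (s:ℝ) ^ s = Real.exp (s * Real.log s) := by
    rw [← Real.rpow_natCast, Real.rpow_def_of_pos hspos, mul_comm]
  have hexp : Real.exp ((s:ℝ) * (1 + Real.log k - Real.log s))
      = Real.exp s * (k:ℝ) ^ s / (s:ℝ) ^ s := by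
    rw [e1, e2, ← Real.exp_add, ← Real.exp_sub]
    ring_nf
  rw [hexp]
  calc (k.choose s : ℝ) ≤ (k:ℝ) ^ s / (Nat.factorial s : ℝ) := h1
    _ = ((s:ℝ) ^ s / (Nat.factorial s : ℝ)) * ((k:ℝ) ^ s / (s:ℝ) ^ s) := by
        field_simp
    _ ≤ Real.exp s * ((k:ℝ) ^ s / (s:ℝ) ^ s) := by
        apply mul_le_mul_of_nonneg_right h2
        positivity
    _ = Real.exp s * (k:ℝ) ^ s / (s:ℝ) ^ s := by ring


lemma per_sum_bound (c : ℝ) (hc : 1/2 < c) (k : ℕ) (hk : 2 ≤ k) (q : ℝ) (hq0 : 0 ≤ q)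
    (hqp : q ≤ Real.exp (-(2*c*Real.log k/k)))
    (hB : Real.exp ((1 - Real.log ((2*c-1)/(8*c))) - (2*c-1)/2 * Real.log k) < 1) :
    ∑ s ∈ Finset.Icc 1 (k/2), (k.choose s : ℝ) * q ^ (s*(k-s)) ≤
      Real.exp ((1 - Real.log ((2*c-1)/(8*c))) - (2*c-1)/2 * Real.log k) /
        (1 - Real.exp ((1 - Real.log ((2*c-1)/(8*c))) - (2*c-1)/2 * Real.log k)) := by
  have hc0 : (0:ℝ) < c := by linarith
  set p : ℝ := 2*c*Real.log k/k with hpdef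
  set δ : ℝ := (2*c-1)/(8*c) with hδdef
  set B : ℝ := (1 - Real.log δ) - (2*c-1)/2 * Real.log k with hBdef
  have hkR : (2:ℝ) ≤ (k:ℝ) := by exact_mod_cast hk
  have hk0 : (0:ℝ) < (k:ℝ) := by linarith
  have hlogk : 0 ≤ Real.log k := Real.log_nonneg (by linarith)
  have hp0 : 0 ≤ p := by
    apply div_nonneg _ hk0.le
    have : 0 ≤ 2*c := by linarith
    positivity
  have hδpos : 0 < δ := by
    apply div_pos <;> linarith
  have hδ1 : δ ≤ 1 := by
    rw [hδdef, div_le_one (by linarith)]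
    linarith
  have hlogδ : Real.log δ ≤ 0 := Real.log_nonpos hδpos.le hδ1
  have hpk : p * k = 2*c*Real.log k := by
    rw [hpdef]; field_simp
  have hterm : ∀ s ∈ Finset.Icc 1 (k/2),
      (k.choose s : ℝ) * q ^ (s*(k-s)) ≤ Real.exp B ^ s := by
    intro s hs
    rw [Finset.mem_Icc] at hs
    obtain ⟨hs1, hs2⟩ := hs
    have hsk : s ≤ k := le_trans hs2 (Nat.div_le_self k 2)
    have hskR : (s:ℝ) ≤ (k:ℝ)/2 :=
      le_trans (Nat.cast_le.mpr hs2) Nat.cast_div_le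
    have hs1R : (1:ℝ) ≤ (s:ℝ) := by exact_mod_cast hs1
    have hlogs0 : 0 ≤ Real.log s := Real.log_nonneg hs1R
    have ht : ((s*(k-s):ℕ):ℝ) = (s:ℝ)*((k:ℝ)-(s:ℝ)) := by
      push_cast [Nat.cast_sub hsk]
      ring
    have hq_pow : q ^ (s*(k-s)) ≤ Real.exp (-(p * ((s:ℝ) * ((k:ℝ)-(s:ℝ))))) := by
      calc q ^ (s*(k-s)) ≤ (Real.exp (-p)) ^ (s*(k-s)) :=
            pow_le_pow_left₀ hq0 hqp _
        _ = Real.exp (((s*(k-s):ℕ):ℝ) * (-p)) := (Real.exp_nat_mul _ _).symm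
        _ = Real.exp (-(p * ((s:ℝ) * ((k:ℝ)-(s:ℝ))))) := by rw [ht]; ring_nf
    have hchoose := choose_le_exp k s hs1
    have hstep : (k.choose s : ℝ) * q ^ (s*(k-s)) ≤
        Real.exp ((s:ℝ) * (1 + Real.log k - Real.log s) - p * ((s:ℝ) * ((k:ℝ)-(s:ℝ)))) := by
      have e3 : Real.exp ((s:ℝ) * (1 + Real.log k - Real.log s) - p * ((s:ℝ) * ((k:ℝ)-(s:ℝ))))
          = Real.exp ((s:ℝ) * (1 + Real.log k - Real.log s)) *
            Real.exp (-(p * ((s:ℝ) * ((k:ℝ)-(s:ℝ))))) := by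
        rw [← Real.exp_add]; ring_nf
      rw [e3]
      exact mul_le_mul hchoose hq_pow (pow_nonneg hq0 _) (Real.exp_nonneg _)
    set g : ℝ := 1 + Real.log k - Real.log s - p*((k:ℝ) - (s:ℝ)) with hgdef
    have hexp_eq : (s:ℝ) * (1 + Real.log k - Real.log s) - p * ((s:ℝ) * ((k:ℝ)-(s:ℝ)))
        = (s:ℝ) * g := by rw [hgdef]; ring
    have hgB : g ≤ B := by
      by_cases hcase : (s:ℝ) ≤ δ * k
      · have hps : p * s ≤ p * (δ*k) := mul_le_mul_of_nonneg_left hcase hp0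
        have hpδk : p * (δ*k) = (2*c-1)/4 * Real.log k := by
          have h1 : p * (δ*k) = δ * (p*k) := by ring
          rw [h1, hpk, hδdef]
          field_simp
          ring
        rw [hpδk] at hps
        have hexpand : p*((k:ℝ) - (s:ℝ)) = p*k - p*s := by ring
        rw [hgdef, hBdef, hexpand, hpk]
        linarith [mul_nonneg (by linarith : (0:ℝ) ≤ 2*c-1) hlogk, hps, hlogs0, hlogδ]
      · push_neg at hcase
        have hlogs : Real.log δ + Real.log k ≤ Real.log s := by
          rw [← Real.log_mul (ne_of_gt hδpos) (ne_of_gt hk0)]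
          exact Real.log_le_log (by positivity) hcase.le
        have hks : (k:ℝ)/2 ≤ (k:ℝ) - (s:ℝ) := by linarith
        have hps : p * ((k:ℝ)/2) ≤ p * ((k:ℝ)-(s:ℝ)) := mul_le_mul_of_nonneg_left hks hp0
        have hpk2 : p * ((k:ℝ)/2) = c * Real.log k := by
          rw [hpdef]; field_simp
        rw [hpk2] at hps
        rw [hgdef, hBdef]
        linarith [mul_nonneg (by linarith : (0:ℝ) ≤ 2*c-1) hlogk, hps, hlogs, hlogδ, hlogk]
    calc (k.choose s : ℝ) * q ^ (s*(k-s))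
        ≤ Real.exp ((s:ℝ) * g) := by rw [← hexp_eq]; exact hstep
      _ ≤ Real.exp ((s:ℝ) * B) := by
          apply Real.exp_le_exp.mpr
          exact mul_le_mul_of_nonneg_left hgB (by positivity)
      _ = Real.exp B ^ s := Real.exp_nat_mul _ _
  calc ∑ s ∈ Finset.Icc 1 (k/2), (k.choose s : ℝ) * q ^ (s*(k-s))
      ≤ ∑ s ∈ Finset.Icc 1 (k/2), Real.exp B ^ s := Finset.sum_le_sum hterm
    _ ≤ Real.exp B / (1 - Real.exp B) := geom_tail_le (Real.exp_nonneg B) hB _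


lemma total_count (V : Type*) [Fintype V] [DecidableEq V] (m : ℕ) :
    {G : SimpleGraph V | G.edgeSet.ncard = m}.ncard = ((Fintype.card V).choose 2).choose m := by
  rw [← SimpleGraph.card_edgeFinset_top_eq_card_choose_two,
    ← count_graphs V (⊤ : SimpleGraph V).edgeFinset (fun e he => by
      rw [SimpleGraph.mem_edgeFinset, SimpleGraph.edgeSet_top] at he; exact he) m]
  congr 1
  ext G
  simp only [Set.mem_setOf_eq, SimpleGraph.coe_edgeFinset]
  exact ⟨fun h => ⟨SimpleGraph.edgeSet_mono le_top, h⟩, fun h => h.2⟩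

lemma conn_add_disc (V : Type*) [Fintype V] [DecidableEq V] (m : ℕ) :
    {G : SimpleGraph V | G.Connected ∧ G.edgeSet.ncard = m}.ncard
      + {G : SimpleGraph V | ¬ G.Connected ∧ G.edgeSet.ncard = m}.ncard
      = ((Fintype.card V).choose 2).choose m := by
  rw [← total_count V m, ← Set.ncard_union_eq ?_ (Set.toFinite _) (Set.toFinite _)]
  · congr 1
    ext G
    simp only [Set.mem_union, Set.mem_setOf_eq]
    tauto
  · rw [Set.disjoint_left]
    rintro G ⟨h1, -⟩ ⟨h2, -⟩
    exact h2 h1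


/-- `connGraphCount k l` is the number of connected labeled graphs on `k` vertices
with `k - 1 + l` edges (i.e. complexity `l`). -/
noncomputable def connGraphCount (k l : ℕ) : ℕ :=
  Set.ncard {G : SimpleGraph (Fin k) | G.Connected ∧ G.edgeSet.ncard = k - 1 + l}

/-- `l` very large: for fixed `c > 1/2` and `l = l(k) = ⌊c k ln k⌋`,
as `k → ∞`, `C(k,l) ∼ binom(k(k-1)/2, k+l-1)`: asymptotically almost all graphs on
`k` vertices with `k+l-1` edges are connected. -/

theorem C_asymp_verylarge (c : ℝ) (hc : 1 / 2 < c) :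
    Tendsto (fun k : ℕ =>
        (connGraphCount k (⌊c * k * Real.log k⌋₊) : ℝ) /
          (Nat.choose (k * (k - 1) / 2) (k + ⌊c * k * Real.log k⌋₊ - 1) : ℝ))
      atTop (𝓝 1) := by
  have hc' : 1/2 < c := hc
  have hc0 : (0:ℝ) < c := by linarith
  -- B function and its limits
  set Bf : ℕ → ℝ := fun k => (1 - Real.log ((2*c-1)/(8*c))) - (2*c-1)/2 * Real.log k with hBf
  have hBtop : Tendsto Bf atTop atBot := by
    have h1 : Tendsto (fun k : ℕ => Real.log k) atTop atTop :=
      Real.tendsto_log_atTop.comp tendsto_natCast_atTop_atTop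
    have h2 : Tendsto (fun k : ℕ => (2*c-1)/2 * Real.log k) atTop atTop :=
      Tendsto.const_mul_atTop (by linarith) h1
    have h3 : Tendsto (fun k : ℕ => (2*c-1)/2 * Real.log k - (1 - Real.log ((2*c-1)/(8*c))))
        atTop atTop := tendsto_atTop_add_const_right _ _ h2
    have h4 := tendsto_neg_atTop_atBot.comp h3
    have h5 : Bf = fun k : ℕ =>
        -((2*c-1)/2 * Real.log k - (1 - Real.log ((2*c-1)/(8*c)))) := by
      funext k; simp [hBf]
    rw [h5]; exact h4
  have hr0 : Tendsto (fun k => Real.exp (Bf k)) atTop (𝓝 0) :=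
    Real.tendsto_exp_atBot.comp hBtop
  have hu0 : Tendsto (fun k => Real.exp (Bf k) / (1 - Real.exp (Bf k))) atTop (𝓝 0) := by
    have h := hr0.div ((tendsto_const_nhds (x := (1:ℝ))).sub hr0) (by norm_num)
    rw [sub_zero, zero_div] at h; exact h
  have hrlt1 : ∀ᶠ k in atTop, Real.exp (Bf k) < 1 :=
    hr0.eventually_lt_const (by norm_num)
  -- log smallness
  have hlog_small : ∀ᶠ k : ℕ in atTop, c * Real.log k ≤ (k:ℝ)/8 := by
    have h := Real.isLittleO_log_id_atTop.bound (c := 1/(8*c)) (by positivity)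
    have h2 := (tendsto_natCast_atTop_atTop (R := ℝ)).eventually h
    filter_upwards [h2, eventually_ge_atTop 1] with k hk hk1
    have hk1R : (1:ℝ) ≤ (k:ℝ) := by exact_mod_cast hk1
    have hlogk : 0 ≤ Real.log k := Real.log_nonneg hk1R
    simp only [Real.norm_eq_abs, id_eq, abs_of_nonneg hlogk,
      abs_of_nonneg (by linarith : (0:ℝ) ≤ (k:ℝ))] at hk
    calc c * Real.log k ≤ c * (1/(8*c) * k) := by
          apply mul_le_mul_of_nonneg_left hk hc0.le
      _ = (k:ℝ)/8 := by field_simp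
  -- the ratio function for disconnected graphs
  set Dr : ℕ → ℝ := fun k =>
    (Set.ncard {G : SimpleGraph (Fin k) | ¬G.Connected ∧
        G.edgeSet.ncard = k + ⌊c * k * Real.log k⌋₊ - 1} : ℝ) /
      (Nat.choose (k * (k - 1) / 2) (k + ⌊c * k * Real.log k⌋₊ - 1) : ℝ) with hDr
  have hmain : ∀ᶠ k : ℕ in atTop,
      ((connGraphCount k (⌊c * k * Real.log k⌋₊) : ℝ) /
          (Nat.choose (k * (k - 1) / 2) (k + ⌊c * k * Real.log k⌋₊ - 1) : ℝ)
        = 1 - Dr k) ∧ Dr k ≤ Real.exp (Bf k) / (1 - Real.exp (Bf k)) := by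
    filter_upwards [eventually_ge_atTop 4, hlog_small, hrlt1] with k hk4 hlog hB1
    simp only [hDr, hBf] at *
    set l := ⌊c * (k:ℝ) * Real.log k⌋₊ with hl
    set m := k + l - 1 with hm
    set N := k * (k - 1) / 2 with hN
    have hk2 : 2 ≤ k := by omega
    have hk1R : (1:ℝ) ≤ (k:ℝ) := by exact_mod_cast (by omega : 1 ≤ k)
    have hkR : (2:ℝ) ≤ (k:ℝ) := by exact_mod_cast hk2
    have hk4R : (4:ℝ) ≤ (k:ℝ) := by exact_mod_cast hk4
    have hk0R : (0:ℝ) < (k:ℝ) := by linarith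
    have hlogk : 0 ≤ Real.log k := Real.log_nonneg hk1R
    have hx0 : 0 ≤ c * (k:ℝ) * Real.log k := by positivity
    have hlfloor : (l:ℝ) ≤ c * (k:ℝ) * Real.log k := Nat.floor_le hx0
    have hlfloor2 : c * (k:ℝ) * Real.log k - 1 ≤ (l:ℝ) := by
      have := Nat.lt_floor_add_one (c * (k:ℝ) * Real.log k)
      rw [← hl] at this
      linarith
    have h2N : 2 * N = k * (k - 1) := by
      rw [hN, Nat.mul_div_cancel' (Nat.even_mul_pred_self k).two_dvd]
    have hN0 : 0 < N := by
      have h12 : 4 * 3 ≤ k * (k - 1) := Nat.mul_le_mul hk4 (by omega)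
      omega
    have hNR : (N:ℝ) = (k:ℝ) * ((k:ℝ) - 1) / 2 := by
      have hcast : ((2 * N : ℕ):ℝ) = ((k * (k - 1) : ℕ):ℝ) := by rw [h2N]
      push_cast [Nat.cast_sub (by omega : 1 ≤ k)] at hcast
      linarith
    have hmR : (m:ℝ) = (k:ℝ) + (l:ℝ) - 1 := by
      rw [hm]
      push_cast [Nat.cast_sub (by omega : 1 ≤ k + l)]
      ring
    have hmNR : (m:ℝ) ≤ (N:ℝ) := by
      rw [hmR, hNR]
      have h2 : (l:ℝ) ≤ (k:ℝ) * ((k:ℝ)/8) :=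
        calc (l:ℝ) ≤ c * (k:ℝ) * Real.log k := hlfloor
          _ = (k:ℝ) * (c * Real.log k) := by ring
          _ ≤ (k:ℝ) * ((k:ℝ)/8) := mul_le_mul_of_nonneg_left hlog (by linarith)
      nlinarith
    have hmN : m ≤ N := by exact_mod_cast (Nat.cast_le (α := ℝ)).mp (by exact_mod_cast hmNR)
    have hT0 : 0 < N.choose m := Nat.choose_pos hmN
    have hT0R : (0:ℝ) < (N.choose m : ℝ) := by exact_mod_cast hT0
    have hN0R : (0:ℝ) < (N:ℝ) := by exact_mod_cast hN0
    -- counting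
    have hpart := conn_add_disc (Fin k) m
    rw [Fintype.card_fin, Nat.choose_two_right, ← hN] at hpart
    have hkl : k - 1 + l = m := by omega
    have hconnval : connGraphCount k l = N.choose m -
        {G : SimpleGraph (Fin k) | ¬ G.Connected ∧ G.edgeSet.ncard = m}.ncard := by
      rw [connGraphCount, hkl]
      omega
    have hDle : {G : SimpleGraph (Fin k) | ¬ G.Connected ∧ G.edgeSet.ncard = m}.ncard
        ≤ N.choose m := by omega
    constructor
    · rw [hconnval, Nat.cast_sub hDle]
      field_simp
    · -- the analytic bound
      have hdisc := disc_count_le (V := Fin k) ⟨⟨0, by omega⟩⟩ m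
      rw [Fintype.card_fin, Nat.choose_two_right, ← hN] at hdisc
      set q : ℝ := ((N - m : ℕ):ℝ) / (N:ℝ) with hq
      have hq0 : 0 ≤ q := by positivity
      have hcastNm : ((N - m : ℕ):ℝ) = (N:ℝ) - (m:ℝ) := by
        rw [Nat.cast_sub hmN]
      have hqp : q ≤ Real.exp (-(2*c*Real.log k/(k:ℝ))) := by
        have hq1 : q = 1 - (m:ℝ)/(N:ℝ) := by
          rw [hq, hcastNm]
          field_simp
        have e1 : 1 - (m:ℝ)/(N:ℝ) ≤ Real.exp (-((m:ℝ)/(N:ℝ))) := by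
          have := Real.add_one_le_exp (-((m:ℝ)/(N:ℝ)))
          linarith
        have e2 : 2*c*Real.log k/(k:ℝ) ≤ (m:ℝ)/(N:ℝ) := by
          rw [div_le_div_iff₀ hk0R hN0R]
          rw [hNR, hmR]
          nlinarith [hlfloor2, hlogk, hkR, hc0, mul_nonneg (mul_nonneg hc0.le hk0R.le) hlogk]
        calc q = 1 - (m:ℝ)/(N:ℝ) := hq1
          _ ≤ Real.exp (-((m:ℝ)/(N:ℝ))) := e1
          _ ≤ Real.exp (-(2*c*Real.log k/(k:ℝ))) := by
              apply Real.exp_le_exp.mpr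
              linarith
      have hsum : ({G : SimpleGraph (Fin k) | ¬ G.Connected ∧ G.edgeSet.ncard = m}.ncard : ℝ)
          ≤ (∑ s ∈ Finset.Icc 1 (k/2), (k.choose s:ℝ) * q ^ (s*(k-s))) * (N.choose m : ℝ) := by
        calc ({G : SimpleGraph (Fin k) | ¬ G.Connected ∧ G.edgeSet.ncard = m}.ncard : ℝ)
            ≤ ((∑ s ∈ Finset.Icc 1 (k/2),
                (k.choose s) * ((N - s*(k-s)).choose m) : ℕ) : ℝ) := by exact_mod_cast hdisc
          _ = ∑ s ∈ Finset.Icc 1 (k/2),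
                (k.choose s : ℝ) * (((N - s*(k-s)).choose m : ℕ) : ℝ) := by push_cast; rfl
          _ ≤ ∑ s ∈ Finset.Icc 1 (k/2),
                (k.choose s : ℝ) * (q ^ (s*(k-s)) * (N.choose m : ℝ)) := by
              apply Finset.sum_le_sum
              intro s hs
              exact mul_le_mul_of_nonneg_left (choose_ratio_real N m _ hN0) (Nat.cast_nonneg _)
          _ = (∑ s ∈ Finset.Icc 1 (k/2), (k.choose s:ℝ) * q ^ (s*(k-s))) * (N.choose m : ℝ) := by
              rw [Finset.sum_mul]
              apply Finset.sum_congr rfl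
              intro s _
              ring
      have hratio : ({G : SimpleGraph (Fin k) | ¬ G.Connected ∧ G.edgeSet.ncard = m}.ncard : ℝ)
          / (N.choose m : ℝ) ≤ ∑ s ∈ Finset.Icc 1 (k/2), (k.choose s:ℝ) * q ^ (s*(k-s)) := by
        rw [div_le_iff₀ hT0R]
        exact hsum
      exact hratio.trans (per_sum_bound c hc' k hk2 q hq0 hqp hB1)
  -- assemble
  have hDT0 : Tendsto Dr atTop (𝓝 0) := by
    apply squeeze_zero' (Eventually.of_forall fun k => by rw [hDr]; positivity)
      (hmain.mono fun k h => h.2) hu0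
  have hfinal := (tendsto_const_nhds (x := (1:ℝ))).sub hDT0
  rw [sub_zero] at hfinal
  exact Tendsto.congr' (by filter_upwards [hmain] with k h; exact h.1.symm) hfinal
end

section
/- Let ε = ε(n) → 0⁺ and L = L(n) → ∞ with L·ε² → ∞. Consider the rightwalk with i.i.d. steps Z_i^R ~ Po(1-ε). Then Pr[ESC_L^R] ~ ε as n → ∞, i.e. Pr[ESC_L^R]/ε → 1. -/
open Filter Topology Real Finset

-- Indicator of a proposition, as a real number.
open Classical in
noncomputable def ind (P : Prop) : ℝ := if P then 1 else 0

/-- Poisson point mass: `Pr[Po(r) = n]`. -/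
noncomputable def poissonP (r : ℝ) (n : ℕ) : ℝ := Real.exp (-r) * r ^ n / n.factorial

/-- The escape condition for the leftwalk `Y_0 = 1`, `Y_i = Y_{i-1} + Z_i - 1` up to
time `L`: `Y_t > 0` for `1 ≤ t ≤ L`, i.e. `Z_1 + ⋯ + Z_t ≥ t`.  Here bin `i+1`
contains `z i` balls (0-based indexing). -/
def leftOK (L : ℕ) (z : Fin L → ℕ) : Prop :=
  ∀ t, 1 ≤ t → t ≤ L → t ≤ ∑ i ∈ Finset.univ.filter (fun i : Fin L => (i : ℕ) < t), z i

/-- The escape condition for the rightwalk `Y_0^R = 0`, `Y_i^R = Y_{i-1}^R + 1 - Z_i^R`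
up to time `L`: `Y_t^R > 0` for `1 ≤ t ≤ L`, i.e. `Z_1^R + ⋯ + Z_t^R ≤ t - 1`. -/
def rightOK (L : ℕ) (z : Fin L → ℕ) : Prop :=
  ∀ t, 1 ≤ t → t ≤ L → (∑ i ∈ Finset.univ.filter (fun i : Fin L => (i : ℕ) < t), z i) < t

/-- `Pr[ESC_L]` for the leftwalk with independent steps `Z_i ∼ Po(lam i)`. -/
noncomputable def escLProbV (lam : ℕ → ℝ) (L : ℕ) : ℝ :=
  ∑' z : Fin L → ℕ, (∏ i : Fin L, poissonP (lam (i : ℕ)) (z i)) * ind (leftOK L z)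

/-- `Pr[ESC_L]` for the leftwalk with i.i.d. steps `Z_i ∼ Po(r)`. -/
noncomputable def escLProb (r : ℝ) (L : ℕ) : ℝ := escLProbV (fun _ => r) L

/-- `Pr[ESC]` for the leftwalk with i.i.d. steps `Z_i ∼ Po(r)`: since
`ESC = ⋂_L ESC_L` is a decreasing intersection, `Pr[ESC] = inf_L Pr[ESC_L]`. -/
noncomputable def escProb (r : ℝ) : ℝ := ⨅ L : ℕ, escLProb r L

/-- `Pr[ESC_L^R]` for the rightwalk with independent steps `Z_i^R ∼ Po(lam i)`. -/
noncomputable def escRLProbV (lam : ℕ → ℝ) (L : ℕ) : ℝ :=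
  ∑' z : Fin L → ℕ, (∏ i : Fin L, poissonP (lam (i : ℕ)) (z i)) * ind (rightOK L z)

/-- `Pr[ESC_L^R]` for the rightwalk with i.i.d. steps `Z_i^R ∼ Po(r)`. -/
noncomputable def escRLProb (r : ℝ) (L : ℕ) : ℝ := escRLProbV (fun _ => r) L

/-- `Pr[ESC^R]` for the rightwalk with i.i.d. steps `Z_i^R ∼ Po(r)`. -/
noncomputable def escRProb (r : ℝ) : ℝ := ⨅ L : ℕ, escRLProb r L

lemma ind_nonneg (P : Prop) : 0 ≤ ind P := by unfold ind; split <;> norm_num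
lemma ind_le_one (P : Prop) : ind P ≤ 1 := by unfold ind; split <;> norm_num
lemma ind_of {P : Prop} (h : P) : ind P = 1 := by simp [ind, h]
lemma ind_of_not {P : Prop} (h : ¬P) : ind P = 0 := by simp [ind, h]
lemma ind_congr0 : True := trivial
lemma ind_congr {P Q : Prop} (h : P ↔ Q) : ind P = ind Q := by unfold ind; congr 1; exact propext h

lemma poissonP_nonneg {r : ℝ} (hr : 0 ≤ r) (n : ℕ) : 0 ≤ poissonP r n := by
  unfold poissonP; positivity

lemma summable_poissonP (r : ℝ) : Summable (poissonP r) := by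
  have : poissonP r = fun n => Real.exp (-r) * (r ^ n / n.factorial) := by
    funext n; unfold poissonP; ring
  rw [this]
  exact (Real.summable_pow_div_factorial r).mul_left _

lemma tsum_pow_div_factorial (r : ℝ) : ∑' n : ℕ, r ^ n / n.factorial = Real.exp r := by
  rw [Real.exp_eq_exp_ℝ, NormedSpace.exp_eq_tsum_div]

lemma tsum_poissonP (r : ℝ) : ∑' n, poissonP r n = 1 := by
  have : poissonP r = fun n => Real.exp (-r) * (r ^ n / n.factorial) := by
    funext n; unfold poissonP; ring
  rw [this, tsum_mul_left, tsum_pow_div_factorial, ← Real.exp_add]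
  simp

lemma succ_mul_poissonP (r : ℝ) (k : ℕ) :
    ((k : ℝ) + 1) * poissonP r (k + 1) = r * poissonP r k := by
  unfold poissonP
  rw [Nat.factorial_succ]
  have h1 : ((k : ℝ) + 1) ≠ 0 := by positivity
  have h2 : (k.factorial : ℝ) ≠ 0 := Nat.cast_ne_zero.2 k.factorial_ne_zero
  push_cast
  field_simp
  ring

lemma summable_mul_poissonP (r : ℝ) : Summable (fun k : ℕ => (k : ℝ) * poissonP r k) := by
  apply (summable_nat_add_iff 1).mp
  have h : Summable (fun n : ℕ => r * poissonP r n) := (summable_poissonP r).mul_left r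
  apply h.congr
  intro n
  push_cast
  exact (succ_mul_poissonP r n).symm

lemma tsum_mul_poissonP (r : ℝ) : ∑' k : ℕ, (k : ℝ) * poissonP r k = r := by
  rw [Summable.tsum_eq_zero_add (summable_mul_poissonP r)]
  have h : ∀ b : ℕ, ((b + 1 : ℕ) : ℝ) * poissonP r (b + 1) = r * poissonP r b := by
    intro b; push_cast; exact succ_mul_poissonP r b
  rw [tsum_congr h, tsum_mul_left, tsum_poissonP]
  simp

lemma sm2_succ (r : ℝ) (n : ℕ) :
    ((n + 1 : ℕ) : ℝ) * (((n + 1 : ℕ) : ℝ) - 1) * poissonP r (n + 1)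
      = r * ((n : ℝ) * poissonP r n) := by
  push_cast
  linear_combination (n : ℝ) * succ_mul_poissonP r n

lemma summable_sm2 (r : ℝ) : Summable (fun k : ℕ => (k : ℝ) * ((k : ℝ) - 1) * poissonP r k) := by
  apply (summable_nat_add_iff 1).mp
  have h : Summable (fun n : ℕ => r * ((n : ℝ) * poissonP r n)) :=
    (summable_mul_poissonP r).mul_left r
  exact h.congr fun n => (sm2_succ r n).symm

lemma tsum_sm2 (r : ℝ) : ∑' k : ℕ, (k : ℝ) * ((k : ℝ) - 1) * poissonP r k = r ^ 2 := by
  rw [Summable.tsum_eq_zero_add (summable_sm2 r)]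
  rw [tsum_congr (fun b => sm2_succ r b), tsum_mul_left, tsum_mul_poissonP]
  simp
  ring

lemma centered_sq_eq (r : ℝ) (k : ℕ) :
    ((k : ℝ) - r) ^ 2 * poissonP r k
      = (k : ℝ) * ((k : ℝ) - 1) * poissonP r k + (1 - 2 * r) * ((k : ℝ) * poissonP r k)
        + r ^ 2 * poissonP r k := by ring

lemma summable_centered_sq (r : ℝ) :
    Summable (fun k : ℕ => ((k : ℝ) - r) ^ 2 * poissonP r k) := by
  have := ((summable_sm2 r).add ((summable_mul_poissonP r).mul_left (1 - 2 * r))).add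
    ((summable_poissonP r).mul_left (r ^ 2))
  exact this.congr fun k => (centered_sq_eq r k).symm

lemma tsum_centered_sq (r : ℝ) : ∑' k : ℕ, ((k : ℝ) - r) ^ 2 * poissonP r k = r := by
  rw [tsum_congr (centered_sq_eq r)]
  rw [Summable.tsum_add (((summable_sm2 r).add ((summable_mul_poissonP r).mul_left (1 - 2 * r))))
      ((summable_poissonP r).mul_left (r ^ 2)),
    Summable.tsum_add (summable_sm2 r) ((summable_mul_poissonP r).mul_left (1 - 2 * r)),
    tsum_sm2, tsum_mul_left, tsum_mul_left, tsum_mul_poissonP, tsum_poissonP]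
  ring

lemma poissonP_conv (a b : ℝ) (k : ℕ) :
    ∑ j ∈ Finset.range (k + 1), poissonP a j * poissonP b (k - j) = poissonP (a + b) k := by
  have h : ∀ j ∈ Finset.range (k + 1),
      poissonP a j * poissonP b (k - j)
        = Real.exp (-(a + b)) / k.factorial * (a ^ j * b ^ (k - j) * (k.choose j)) := by
    intro j hj
    have hj' : j ≤ k := Nat.lt_succ_iff.mp (Finset.mem_range.mp hj)
    have hk : (k.factorial : ℝ) = (k.choose j) * j.factorial * (k - j).factorial := by
      exact_mod_cast (Nat.choose_mul_factorial_mul_factorial hj').symm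
    have h1 : (j.factorial : ℝ) ≠ 0 := Nat.cast_ne_zero.2 j.factorial_ne_zero
    have h2 : ((k - j).factorial : ℝ) ≠ 0 := Nat.cast_ne_zero.2 (k - j).factorial_ne_zero
    have h3 : (k.choose j : ℝ) ≠ 0 :=
      Nat.cast_ne_zero.2 (Nat.choose_pos hj').ne'
    unfold poissonP
    rw [neg_add, Real.exp_add, hk]
    field_simp
  rw [Finset.sum_congr rfl h, ← Finset.mul_sum, ← add_pow]
  unfold poissonP
  ring

noncomputable def finSnocEquiv (L : ℕ) : ((Fin L → ℕ) × ℕ) ≃ (Fin (L + 1) → ℕ) :=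
  (Equiv.prodComm _ _).trans (Fin.snocEquiv (fun _ => ℕ))

lemma finSnocEquiv_apply (L : ℕ) (z : Fin L → ℕ) (a : ℕ) :
    finSnocEquiv L (z, a) = Fin.snoc z a := rfl

lemma prod_snoc_poissonP (r : ℝ) (L : ℕ) (z : Fin L → ℕ) (a : ℕ) :
    ∏ i : Fin (L + 1), poissonP r ((Fin.snoc z a : Fin (L + 1) → ℕ) i)
      = (∏ i, poissonP r (z i)) * poissonP r a := by
  rw [Fin.prod_univ_castSucc]
  simp

lemma prodP_nonneg {r : ℝ} (hr : 0 ≤ r) {L : ℕ} (z : Fin L → ℕ) :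
    0 ≤ ∏ i, poissonP r (z i) :=
  Finset.prod_nonneg fun i _ => poissonP_nonneg hr _

lemma summable_prodP {r : ℝ} (hr : 0 ≤ r) :
    ∀ L, Summable (fun z : Fin L → ℕ => ∏ i, poissonP r (z i))
  | 0 => by
      apply summable_of_finite_support
      exact Set.Finite.subset (Set.finite_univ) (Set.subset_univ _)
  | (L + 1) => by
      have h := Summable.mul_of_nonneg (summable_prodP hr L) (summable_poissonP r)
        (fun z => prodP_nonneg hr z) (fun n => poissonP_nonneg hr n)
      apply ((finSnocEquiv L).summable_iff).mp
      apply h.congr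
      rintro ⟨z, a⟩
      simp only [Function.comp_apply, finSnocEquiv_apply]
      exact (prod_snoc_poissonP r L z a).symm

lemma summable_weighted {r : ℝ} (hr : 0 ≤ r) (L : ℕ) (w : (Fin L → ℕ) → ℝ)
    (h0 : ∀ z, 0 ≤ w z) (h1 : ∀ z, w z ≤ 1) :
    Summable (fun z : Fin L → ℕ => (∏ i, poissonP r (z i)) * w z) :=
  Summable.of_nonneg_of_le (fun z => mul_nonneg (prodP_nonneg hr z) (h0 z))
    (fun z => mul_le_of_le_one_right (prodP_nonneg hr z) (h1 z))
    (summable_prodP hr L)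

lemma sum_univ_filter_lt (L : ℕ) (z : Fin L → ℕ) :
    ∑ i ∈ Finset.univ.filter (fun i : Fin L => (i : ℕ) < L), z i = ∑ i, z i := by
  rw [Finset.filter_true_of_mem (fun i _ => i.isLt)]

lemma psum_snoc (L t : ℕ) (z : Fin L → ℕ) (a : ℕ) (ht : t ≤ L) :
    ∑ i ∈ Finset.univ.filter (fun i : Fin (L + 1) => (i : ℕ) < t), (Fin.snoc z a : Fin (L + 1) → ℕ) i
      = ∑ i ∈ Finset.univ.filter (fun i : Fin L => (i : ℕ) < t), z i := by
  rw [Finset.sum_filter, Finset.sum_filter, Fin.sum_univ_castSucc]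
  simp only [Fin.coe_castSucc, Fin.snoc_castSucc, Fin.snoc_last, Fin.val_last]
  rw [if_neg (by omega : ¬ (L < t)), add_zero]

lemma sum_snoc (L : ℕ) (z : Fin L → ℕ) (a : ℕ) :
    ∑ i : Fin (L + 1), (Fin.snoc z a : Fin (L + 1) → ℕ) i = (∑ i, z i) + a := by
  rw [Fin.sum_univ_castSucc]
  simp

lemma rightOK_snoc (L : ℕ) (z : Fin L → ℕ) (a : ℕ) :
    rightOK (L + 1) (Fin.snoc z a) ↔ rightOK L z ∧ (∑ i, z i) + a < L + 1 := by
  constructor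
  · intro h
    refine ⟨fun t h1 h2 => ?_, ?_⟩
    · have := h t h1 (le_trans h2 (Nat.le_succ L))
      rwa [psum_snoc L t z a h2] at this
    · have := h (L + 1) (by omega) le_rfl
      rwa [sum_univ_filter_lt, sum_snoc] at this
  · rintro ⟨h1, h2⟩ t ht1 ht2
    rcases Nat.lt_or_ge t (L + 1) with h | h
    · rw [psum_snoc L t z a (by omega)]
      exact h1 t ht1 (by omega)
    · have : t = L + 1 := le_antisymm ht2 h
      subst this
      rw [sum_univ_filter_lt, sum_snoc]
      exact h2

lemma rightOK_sum_lt {L : ℕ} (hL : 1 ≤ L) {z : Fin L → ℕ} (h : rightOK L z) :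
    ∑ i, z i < L := by
  have := h L hL le_rfl
  rwa [sum_univ_filter_lt] at this

noncomputable def FF (r : ℝ) (L k : ℕ) : ℝ :=
  ∑' z : Fin L → ℕ, (∏ i, poissonP r (z i)) * ind (rightOK L z ∧ (∑ i, z i) = k)

lemma summable_FF {r : ℝ} (hr : 0 ≤ r) (L k : ℕ) :
    Summable (fun z : Fin L → ℕ =>
      (∏ i, poissonP r (z i)) * ind (rightOK L z ∧ (∑ i, z i) = k)) :=
  summable_weighted hr L _ (fun z => ind_nonneg _) (fun z => ind_le_one _)

lemma FF_zero (r : ℝ) : FF r 0 0 = 1 := by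
  unfold FF
  rw [tsum_eq_single (fun i => i.elim0)]
  · rw [ind_of ⟨fun t ht1 ht2 => by omega, by simp⟩]
    simp
  · intro z hz
    exact absurd (Subsingleton.elim z _) hz

lemma FF_eq_zero {L k : ℕ} (hL : 1 ≤ L) (hk : L ≤ k) (r : ℝ) : FF r L k = 0 := by
  unfold FF
  convert tsum_zero with z
  have h : ¬(rightOK L z ∧ (∑ i, z i) = k) := by
    rintro ⟨h1, h2⟩
    have := rightOK_sum_lt hL h1
    omega
  rw [ind_of_not h, mul_zero]

lemma FF_succ {r : ℝ} (hr : 0 ≤ r) (L k : ℕ) (hk : k ≤ L) :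
    FF r (L + 1) k = ∑ j ∈ Finset.range (k + 1), FF r L j * poissonP r (k - j) := by
  unfold FF
  have hpt : ∀ p : (Fin L → ℕ) × ℕ,
      (∏ i, poissonP r (finSnocEquiv L p i)) *
        ind (rightOK (L + 1) (finSnocEquiv L p) ∧ (∑ i, finSnocEquiv L p i) = k)
      = ((∏ i, poissonP r (p.1 i)) * poissonP r p.2) *
          ind (rightOK L p.1 ∧ (∑ i, p.1 i) + p.2 = k) := by
    rintro ⟨z, a⟩
    dsimp only
    rw [finSnocEquiv_apply, prod_snoc_poissonP]
    congr 1
    apply ind_congr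
    rw [sum_snoc, rightOK_snoc]
    constructor
    · rintro ⟨⟨h1, _⟩, h3⟩; exact ⟨h1, h3⟩
    · rintro ⟨h1, h2⟩; exact ⟨⟨h1, by omega⟩, h2⟩
  refine Eq.trans (((finSnocEquiv L).tsum_eq _).symm.trans (tsum_congr hpt)) ?_
  -- summability over the product
  have hsum2 : Summable (fun p : (Fin L → ℕ) × ℕ =>
      (∏ i, poissonP r (p.1 i)) * poissonP r p.2) := by
    apply Summable.mul_of_nonneg (summable_prodP hr L) (summable_poissonP r)
    · exact Pi.le_def.mpr fun z => prodP_nonneg hr z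
    · exact Pi.le_def.mpr fun n => poissonP_nonneg hr n
  have hsumg : Summable (fun p : (Fin L → ℕ) × ℕ =>
      ((∏ i, poissonP r (p.1 i)) * poissonP r p.2) *
        ind (rightOK L p.1 ∧ (∑ i, p.1 i) + p.2 = k)) := by
    apply Summable.of_nonneg_of_le _ _ hsum2
    · intro p
      exact mul_nonneg (mul_nonneg (prodP_nonneg hr p.1) (poissonP_nonneg hr p.2)) (ind_nonneg _)
    · intro p
      exact mul_le_of_le_one_right
        (mul_nonneg (prodP_nonneg hr p.1) (poissonP_nonneg hr p.2)) (ind_le_one _)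
  rw [Summable.tsum_prod' hsumg (fun z => by
    apply Summable.of_nonneg_of_le _ _ ((summable_poissonP r).mul_left (∏ i, poissonP r (z i)))
    · intro a
      exact mul_nonneg (mul_nonneg (prodP_nonneg hr z) (poissonP_nonneg hr a)) (ind_nonneg _)
    · intro a
      exact mul_le_of_le_one_right
        (mul_nonneg (prodP_nonneg hr z) (poissonP_nonneg hr a)) (ind_le_one _))]
  -- evaluate inner sums over a
  have hinner : ∀ z : Fin L → ℕ,
      ∑' a : ℕ, ((∏ i, poissonP r (z i)) * poissonP r a) *
          ind (rightOK L z ∧ (∑ i, z i) + a = k)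
        = ∑ j ∈ Finset.range (k + 1),
            ((∏ i, poissonP r (z i)) * ind (rightOK L z ∧ (∑ i, z i) = j)) *
              poissonP r (k - j) := by
    intro z
    by_cases hs : (∑ i, z i) ≤ k
    · rw [tsum_eq_single (k - ∑ i, z i) (fun a ha => by
        rw [ind_of_not (fun hcon => ha (by omega)), mul_zero])]
      rw [Finset.sum_eq_single_of_mem (∑ i, z i) (Finset.mem_range.mpr (by omega))
        (fun j _ hj => by
          rw [ind_of_not (fun hcon => hj (by omega)), mul_zero, zero_mul])]
      have h1 : ind (rightOK L z ∧ (∑ i, z i) + (k - ∑ i, z i) = k)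
          = ind (rightOK L z) := ind_congr (and_iff_left (by omega))
      have h2 : ind (rightOK L z ∧ (∑ i, z i) = (∑ i, z i)) = ind (rightOK L z) :=
        ind_congr (and_iff_left rfl)
      rw [h1, h2]
      ring
    · rw [tsum_congr (fun a => by
        rw [ind_of_not (fun hcon => hs (by omega)), mul_zero]), tsum_zero]
      rw [Finset.sum_congr rfl (fun j hj => by
        rw [ind_of_not (fun hcon => hs (by
          rw [Finset.mem_range] at hj
          omega)), mul_zero, zero_mul])]
      simp
  rw [tsum_congr hinner]
  rw [Summable.tsum_finsetSum (fun j hj => (summable_FF hr L j).mul_right (poissonP r (k - j)))]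
  apply Finset.sum_congr rfl
  intro j hj
  rw [tsum_mul_right]

lemma conv_step (r : ℝ) (L k : ℕ) (hL : 1 ≤ L) (hk : k ≤ L) :
    ∑ j ∈ Finset.range (k + 1), (((L : ℝ) - j) / L) * poissonP ((L : ℝ) * r) j * poissonP r (k - j)
      = (((L : ℝ) + 1 - k) / ((L : ℝ) + 1)) * poissonP (((L : ℝ) + 1) * r) k := by
  have hL0 : (L : ℝ) ≠ 0 := Nat.cast_ne_zero.2 (by omega)
  have hL1 : (L : ℝ) + 1 ≠ 0 := by positivity
  have hsplit : ∀ j ∈ Finset.range (k + 1),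
      (((L : ℝ) - j) / L) * poissonP ((L : ℝ) * r) j * poissonP r (k - j)
        = poissonP ((L : ℝ) * r) j * poissonP r (k - j)
          - ((j : ℝ) / L) * poissonP ((L : ℝ) * r) j * poissonP r (k - j) := by
    intro j _
    field_simp
  rw [Finset.sum_congr rfl hsplit, Finset.sum_sub_distrib]
  have h1 : ∑ j ∈ Finset.range (k + 1), poissonP ((L : ℝ) * r) j * poissonP r (k - j)
      = poissonP (((L : ℝ) + 1) * r) k := by
    have := poissonP_conv ((L : ℝ) * r) r k
    rwa [show (L : ℝ) * r + r = ((L : ℝ) + 1) * r by ring] at this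
  have h2 : ∑ j ∈ Finset.range (k + 1),
      ((j : ℝ) / L) * poissonP ((L : ℝ) * r) j * poissonP r (k - j)
        = ((k : ℝ) / ((L : ℝ) + 1)) * poissonP (((L : ℝ) + 1) * r) k := by
    rw [Finset.sum_range_succ']
    simp only [Nat.cast_zero, zero_div, zero_mul]
    cases k with
    | zero => simp
    | succ m =>
      have hterm : ∀ j, ((j + 1 : ℕ) : ℝ) / L * poissonP ((L : ℝ) * r) (j + 1)
            * poissonP r (m + 1 - (j + 1))
          = r * (poissonP ((L : ℝ) * r) j * poissonP r (m - j)) := by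
        intro j
        have h := succ_mul_poissonP ((L : ℝ) * r) j
        rw [Nat.succ_sub_succ]
        push_cast
        field_simp
        linear_combination poissonP r (m - j) * h
      rw [Finset.sum_congr rfl (fun j _ => hterm j), ← Finset.mul_sum, add_zero,
        poissonP_conv ((L : ℝ) * r) r m,
        show (L : ℝ) * r + r = ((L : ℝ) + 1) * r by ring]
      have h := succ_mul_poissonP (((L : ℝ) + 1) * r) m
      push_cast
      rw [div_mul_eq_mul_div, eq_comm, div_eq_iff hL1]
      linear_combination h
  rw [h1, h2]
  field_simp

lemma FF_closed {r : ℝ} (hr : 0 ≤ r) :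
    ∀ L, 1 ≤ L → ∀ k, k < L → FF r L k = (((L : ℝ) - k) / L) * poissonP ((L : ℝ) * r) k := by
  intro L
  induction L with
  | zero => omega
  | succ L ih =>
    intro _ k hk
    rw [FF_succ hr L k (by omega)]
    rcases Nat.eq_zero_or_pos L with hL0 | hL1
    · subst hL0
      interval_cases k
      rw [Finset.sum_range_one, FF_zero, Nat.sub_zero, one_mul]
      norm_num
    · have hFF : ∀ j ∈ Finset.range (k + 1), FF r L j * poissonP r (k - j)
          = (((L : ℝ) - j) / L) * poissonP ((L : ℝ) * r) j * poissonP r (k - j) := by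
        intro j hj
        rcases Nat.lt_or_ge j L with h | h
        · rw [ih hL1 j h]
        · have hjL : j = L := by
            rw [Finset.mem_range] at hj
            omega
          subst hjL
          rw [FF_eq_zero hL1 le_rfl]
          rw [sub_self, zero_div, zero_mul, zero_mul, zero_mul]
      rw [Finset.sum_congr rfl hFF, conv_step r L k hL1 (by omega)]
      push_cast
      ring

lemma escRLProb_eq {r : ℝ} (hr : 0 ≤ r) {L : ℕ} (hL : 1 ≤ L) :
    escRLProb r L
      = ∑ k ∈ Finset.range L, (((L : ℝ) - k) / L) * poissonP ((L : ℝ) * r) k := by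
  unfold escRLProb escRLProbV
  have hpt : ∀ z : Fin L → ℕ,
      (∏ i : Fin L, poissonP ((fun _ => r) (i : ℕ)) (z i)) * ind (rightOK L z)
        = ∑ k ∈ Finset.range L,
            (∏ i, poissonP r (z i)) * ind (rightOK L z ∧ (∑ i, z i) = k) := by
    intro z
    by_cases h : rightOK L z
    · have hs : ∑ i, z i < L := rightOK_sum_lt hL h
      rw [Finset.sum_eq_single_of_mem (∑ i, z i) (Finset.mem_range.mpr hs)
        (fun j _ hj => by
          rw [ind_of_not (fun hcon => hj hcon.2.symm), mul_zero])]
      rw [ind_of h, ind_of ⟨h, rfl⟩]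
    · rw [ind_of_not h, mul_zero]
      rw [Finset.sum_congr rfl (fun j _ => by
        rw [ind_of_not (fun hcon => h hcon.1), mul_zero])]
      simp
  rw [tsum_congr hpt, Summable.tsum_finsetSum (fun k _ =>
    summable_weighted hr L _ (fun z => ind_nonneg _) (fun z => ind_le_one _))]
  exact Finset.sum_congr rfl fun k hk =>
    FF_closed hr L hL k (Finset.mem_range.mp hk)

set_option maxHeartbeats 1000000 in
lemma escRL_value {ε : ℝ} (hε0 : 0 < ε) (hε1 : ε ≤ 1) {L : ℕ} (hL : 1 ≤ L) :
    ∃ δ : ℝ, escRLProb (1 - ε) L = ε + δ ∧ 0 ≤ δ ∧ δ ≤ 1 / ((L : ℝ) * ε) := by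
  have hr : (0 : ℝ) ≤ 1 - ε := by linarith
  have hLpos : (0 : ℝ) < (L : ℝ) := by exact_mod_cast hL
  have hL0 : (L : ℝ) ≠ 0 := ne_of_gt hLpos
  set s : ℝ := (L : ℝ) * (1 - ε) with hs
  have hs0 : 0 ≤ s := by positivity
  set f : ℕ → ℝ := fun k => (((L : ℝ) - k) / L) * poissonP s k with hf
  have hfeq : f = fun k => poissonP s k - (1 / L) * ((k : ℝ) * poissonP s k) := by
    funext k
    rw [hf]
    field_simp
  have hsumf : Summable f := by
    rw [hfeq]
    exact (summable_poissonP s).sub ((summable_mul_poissonP s).mul_left (1 / (L:ℝ)))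
  have htsumf : ∑' k, f k = ε := by
    rw [hfeq, Summable.tsum_sub (summable_poissonP s) ((summable_mul_poissonP s).mul_left (1 / (L:ℝ))),
      tsum_poissonP, tsum_mul_left, tsum_mul_poissonP]
    rw [hs]
    field_simp
    ring
  have hsplit := Summable.sum_add_tsum_nat_add L hsumf
  have hesc : escRLProb (1 - ε) L = ∑ k ∈ Finset.range L, f k := escRLProb_eq hr hL
  set δ : ℝ := ∑' i : ℕ, ((i : ℝ) / L) * poissonP s (i + L) with hδ
  have hneg : ∀ i : ℕ, f (i + L) = -(((i : ℝ) / L) * poissonP s (i + L)) := by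
    intro i
    rw [hf]
    push_cast
    field_simp
    ring
  have htail : ∑' i : ℕ, f (i + L) = -δ := by
    rw [tsum_congr hneg, hδ, tsum_neg]
  have hbound : ∀ i : ℕ, ((i : ℝ) / L) * poissonP s (i + L)
      ≤ (1 / ((L : ℝ) ^ 2 * ε)) * ((((i + L : ℕ) : ℝ) - s) ^ 2 * poissonP s (i + L)) := by
    intro i
    have hp := poissonP_nonneg hs0 (i + L)
    have hc : (((i + L : ℕ) : ℝ) - s) = (i : ℝ) + (L : ℝ) * ε := by
      push_cast; rw [hs]; ring
    rw [hc]
    have hkey : (i : ℝ) * ((L : ℝ) * ε) ≤ ((i : ℝ) + (L : ℝ) * ε) ^ 2 := by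
      nlinarith [Nat.cast_nonneg (α := ℝ) i, mul_pos hLpos hε0]
    rw [show (i : ℝ) / L * poissonP s (i + L)
        = ((i : ℝ) * ((L : ℝ) * ε) * poissonP s (i + L)) / ((L : ℝ) ^ 2 * ε) by
          field_simp,
      show (1 / ((L : ℝ) ^ 2 * ε)) * (((i : ℝ) + (L : ℝ) * ε) ^ 2 * poissonP s (i + L))
        = (((i : ℝ) + (L : ℝ) * ε) ^ 2 * poissonP s (i + L)) / ((L : ℝ) ^ 2 * ε) by ring]
    apply div_le_div_of_nonneg_right ?_ (by positivity)
    exact mul_le_mul_of_nonneg_right hkey hp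
  have hsumtail : Summable (fun i : ℕ => (((i + L : ℕ) : ℝ) - s) ^ 2 * poissonP s (i + L)) :=
    (summable_nat_add_iff L).mpr (summable_centered_sq s)
  have hsumRHS : Summable (fun i : ℕ =>
      (1 / ((L : ℝ) ^ 2 * ε)) * ((((i + L : ℕ) : ℝ) - s) ^ 2 * poissonP s (i + L))) :=
    hsumtail.mul_left _
  have hsumδ : Summable (fun i : ℕ => ((i : ℝ) / L) * poissonP s (i + L)) := by
    apply Summable.of_nonneg_of_le _ hbound hsumRHS
    intro i
    have hp := poissonP_nonneg hs0 (i + L)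
    positivity
  refine ⟨δ, ?_, ?_, ?_⟩
  · rw [hesc]
    have h4 : ∑ k ∈ Finset.range L, f k = ε - (-δ) := by
      rw [← htsumf, ← hsplit, htail]
      ring
    rw [h4]; ring
  · apply tsum_nonneg
    intro i
    have hp := poissonP_nonneg hs0 (i + L)
    positivity
  · have hstep : δ ≤ (1 / ((L : ℝ) ^ 2 * ε)) *
        ∑' i : ℕ, (((i + L : ℕ) : ℝ) - s) ^ 2 * poissonP s (i + L) := by
      rw [← tsum_mul_left]
      exact Summable.tsum_le_tsum hbound hsumδ hsumRHS
    have htail2 : ∑' i : ℕ, (((i + L : ℕ) : ℝ) - s) ^ 2 * poissonP s (i + L) ≤ s := by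
      have h2 := Summable.sum_add_tsum_nat_add L (summable_centered_sq s)
      have h3 : 0 ≤ ∑ i ∈ Finset.range L, ((i : ℝ) - s) ^ 2 * poissonP s i := by
        apply Finset.sum_nonneg
        intro i _
        have hp := poissonP_nonneg hs0 i
        positivity
      rw [tsum_centered_sq s] at h2
      linarith
    have h5 : δ ≤ (1 / ((L : ℝ) ^ 2 * ε)) * s := by
      refine le_trans hstep (mul_le_mul_of_nonneg_left htail2 (by positivity))
    refine le_trans h5 ?_
    rw [hs, div_mul_eq_mul_div, div_le_div_iff₀ (by positivity) (by positivity)]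
    nlinarith [mul_pos hLpos hε0, sq_nonneg ((L : ℝ) * ε)]

/-- Proposition `t4`: if `ε = ε(n) → 0⁺` and `L = L(n) → ∞` with
`L ε² → ∞`, then for the rightwalk with i.i.d. steps `Z_i^R ∼ Po(1-ε)` one has
`Pr[ESC_L^R] ∼ ε`. -/
theorem escRL_asymp (ε : ℕ → ℝ) (L : ℕ → ℕ)
    (hεpos : ∀ n, 0 < ε n) (hε0 : Tendsto ε atTop (𝓝 0))
    (hL : Tendsto L atTop atTop)
    (hLε : Tendsto (fun n : ℕ => (L n : ℝ) * ε n ^ 2) atTop atTop) :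
    Tendsto (fun n : ℕ => escRLProb (1 - ε n) (L n) / ε n) atTop (𝓝 1) := by
  have hε1 : ∀ᶠ n in atTop, ε n < 1 :=
    hε0.eventually (Iio_mem_nhds (by norm_num : (0 : ℝ) < 1))
  have hL1 : ∀ᶠ n in atTop, 1 ≤ L n := hL.eventually_ge_atTop 1
  have hbounds : ∀ᶠ n in atTop,
      1 ≤ escRLProb (1 - ε n) (L n) / ε n ∧
      escRLProb (1 - ε n) (L n) / ε n ≤ 1 + 1 / ((L n : ℝ) * ε n ^ 2) := by
    filter_upwards [hε1, hL1] with n h1 h2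
    obtain ⟨δ, heq, hδ0, hδle⟩ := escRL_value (hεpos n) (le_of_lt h1) h2
    have hεn := hεpos n
    have hLn : (0 : ℝ) < (L n : ℝ) := by exact_mod_cast h2
    constructor
    · rw [heq, le_div_iff₀ hεn]
      linarith
    · rw [heq, div_le_iff₀ hεn]
      have key : δ ≤ 1 / ((L n : ℝ) * ε n ^ 2) * ε n := by
        refine hδle.trans (le_of_eq ?_)
        field_simp
      nlinarith [key]
  have hupper : Tendsto (fun n => 1 + 1 / ((L n : ℝ) * ε n ^ 2)) atTop (𝓝 1) := by
    have h := hLε.inv_tendsto_atTop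
    have h2 : Tendsto (fun _ : ℕ => (1 : ℝ)) atTop (𝓝 1) := tendsto_const_nhds
    simpa [one_div] using h2.add h
  exact tendsto_of_tendsto_of_tendsto_of_le_of_le' tendsto_const_nhds hupper
    (hbounds.mono fun n h => h.1) (hbounds.mono fun n h => h.2)
end

section
/- Let ε = ε(n) → 0⁺ and L = L(n) → ∞ with L·ε² → ∞. Let m = m(n) be integers with m = L(1 - ε + o(ε)), and let p_1^R, …, p_L^R be probabilities summing to 1 with p_i^R = 1/L + o(ε/L) uniformly in i. Place exactly m balls independently into bins 1,…,L, each ball going into bin i with probability p_i^R, and let Z_i^R be the number of balls in bin i. Then the probability f(m) that the resulting rightwalk satisfies ESC_L^R satisfies f(m) ~ ε as n → ∞. -/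
open Filter Topology Real Finset

/-- Probability that, placing exactly `m` balls independently into bins `1,…,L`
(ball `j` goes into bin `i+1` with probability `p i`), the leftwalk
`Y_0 = 1`, `Y_i = Y_{i-1} + Z_i - 1` defined by the bin counts `Z_i` satisfies
`ESC_L`, i.e. `Y_t > 0` (equivalently `#{j : balls in first t bins} ≥ t`)
for all `1 ≤ t ≤ L`. -/
noncomputable def fixedLeftProb (L m : ℕ) (p : ℕ → ℝ) : ℝ :=
  ∑ ω : Fin m → Fin L, (∏ j, p ((ω j : ℕ))) *
    ind (∀ t, 1 ≤ t → t ≤ L →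
      t ≤ (Finset.univ.filter (fun j => ((ω j : ℕ) < t))).card)

/-- Probability that, placing exactly `m` balls independently into bins `1,…,L`
(ball `j` goes into bin `i+1` with probability `p i`), the rightwalk
`Y_0^R = 0`, `Y_i^R = Y_{i-1}^R + 1 - Z_i^R` defined by the bin counts `Z_i^R`
satisfies `ESC_L^R`, i.e. `Y_t^R > 0` (equivalently
`#{j : balls in first t bins} ≤ t - 1`) for all `1 ≤ t ≤ L`. -/
noncomputable def fixedRightProb (L m : ℕ) (p : ℕ → ℝ) : ℝ :=
  ∑ ω : Fin m → Fin L, (∏ j, p ((ω j : ℕ))) *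
    ind (∀ t, 1 ≤ t → t ≤ L →
      (Finset.univ.filter (fun j => ((ω j : ℕ) < t))).card < t)

namespace CycleAux

attribute [local instance] Classical.propDecidable

variable {L m : ℕ}

/-- number of balls in bin `i` -/
noncomputable def cnt (ω : Fin m → Fin L) (i : ℕ) : ℕ :=
  (Finset.univ.filter fun j => (ω j : ℕ) = i).card

/-- cumulative count, wrapping mod `L` -/
noncomputable def Nf (ω : Fin m → Fin L) (k : ℕ) : ℕ :=
  ∑ s ∈ Finset.range k, cnt ω (s % L)

noncomputable def Tf (ω : Fin m → Fin L) (k : ℕ) : ℤ := (k : ℤ) - Nf ω k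

/-- The escape event. -/
def Epred (L : ℕ) {m : ℕ} (ω : Fin m → Fin L) : Prop :=
  ∀ t, 1 ≤ t → t ≤ L →
    (Finset.univ.filter (fun j => ((ω j : ℕ) < t))).card < t

/-- rotate bins: bin `x` becomes bin `(x + (L - r)) % L` -/
noncomputable def rot (r : ℕ) (ω : Fin m → Fin L) : Fin m → Fin L :=
  fun j => ⟨((ω j : ℕ) + (L - r)) % L, Nat.mod_lt _ (ω j).pos⟩

lemma sum_cnt (ω : Fin m → Fin L) : ∑ i ∈ Finset.range L, cnt ω i = m := by
  have h : ∀ j : Fin m, j ∈ Finset.univ → (ω j : ℕ) ∈ Finset.range L := by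
    intro j _; simpa using (ω j).isLt
  have := Finset.card_eq_sum_card_fiberwise h
  simpa [cnt] using this.symm

lemma Nf_add_L (ω : Fin m → Fin L) (k : ℕ) : Nf ω (k + L) = Nf ω k + m := by
  induction k with
  | zero =>
    simp only [Nat.zero_add, Nf, Finset.range_zero, Finset.sum_empty]
    have h1 : ∑ s ∈ Finset.range L, cnt ω (s % L) = ∑ s ∈ Finset.range L, cnt ω s :=
      Finset.sum_congr rfl fun s hs => by
        rw [Nat.mod_eq_of_lt (Finset.mem_range.mp hs)]
    rw [h1, sum_cnt]
  | succ k ih =>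
    have h1 : k + 1 + L = (k + L) + 1 := by omega
    rw [h1]
    simp only [Nf, Finset.sum_range_succ] at *
    rw [ih, Nat.add_mod_right]
    ring

lemma Tf_add_L (ω : Fin m → Fin L) (k : ℕ) :
    Tf ω (k + L) = Tf ω k + ((L : ℤ) - m) := by
  simp only [Tf, Nf_add_L]; push_cast; ring

lemma Nf_mono (ω : Fin m → Fin L) {a b : ℕ} (h : a ≤ b) : Nf ω a ≤ Nf ω b := by
  apply Finset.sum_le_sum_of_subset
  exact Finset.range_subset_range.mpr h

lemma Tf_succ_le (ω : Fin m → Fin L) (k : ℕ) : Tf ω (k + 1) ≤ Tf ω k + 1 := by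
  have : Nf ω k ≤ Nf ω (k + 1) := Nf_mono ω (by omega)
  simp only [Tf]; push_cast; omega

/-- mod arithmetic helper -/
lemma mod_shift_eq {L r s x : ℕ} (hx : x < L) (hr : r < L) (hs : s < L) :
    ((x + (L - r)) % L = s ↔ x = (r + s) % L) := by
  have h2 : x + (L - r) < 2 * L := by omega
  rcases Nat.lt_or_ge (x + (L - r)) L with h1 | h1
  · rw [Nat.mod_eq_of_lt h1]
    rcases Nat.lt_or_ge (r + s) L with h3 | h3
    · rw [Nat.mod_eq_of_lt h3]; omega
    · rw [Nat.mod_eq_sub_mod h3, Nat.mod_eq_of_lt (by omega)]; omega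
  · rw [Nat.mod_eq_sub_mod h1, Nat.mod_eq_of_lt (by omega)]
    rcases Nat.lt_or_ge (r + s) L with h3 | h3
    · rw [Nat.mod_eq_of_lt h3]; omega
    · rw [Nat.mod_eq_sub_mod h3, Nat.mod_eq_of_lt (by omega)]; omega

lemma count_rot (ω : Fin m → Fin L) {r t : ℕ} (hr : r < L) (ht : t ≤ L) :
    (Finset.univ.filter (fun j => ((rot r ω j : ℕ) < t))).card
      = ∑ s ∈ Finset.range t, cnt ω ((r + s) % L) := by
  have hmap : ∀ j : Fin m, j ∈ Finset.univ.filter (fun j => ((rot r ω j : ℕ) < t)) →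
      ((ω j : ℕ) + (L - r)) % L ∈ Finset.range t := by
    intro j hj
    rw [Finset.mem_filter] at hj
    simpa [rot] using hj.2
  rw [Finset.card_eq_sum_card_fiberwise hmap]
  apply Finset.sum_congr rfl
  intro s hs
  have hs' : s < t := Finset.mem_range.mp hs
  have : Finset.filter (fun j => ((ω j : ℕ) + (L - r)) % L = s)
      (Finset.univ.filter (fun j => ((rot r ω j : ℕ) < t)))
      = Finset.univ.filter (fun j => (ω j : ℕ) = (r + s) % L) := by
    ext j
    simp only [Finset.mem_filter, Finset.mem_univ, true_and]
    simp only [rot]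
    constructor
    · rintro ⟨_, h2⟩
      exact (mod_shift_eq (ω j).isLt hr (by omega)).mp h2
    · intro h
      have h2 := (mod_shift_eq (ω j).isLt hr (by omega)).mpr h
      exact ⟨by omega, h2⟩
  rw [this]; rfl

lemma Nf_window (ω : Fin m → Fin L) (r t : ℕ) :
    Nf ω (r + t) = Nf ω r + ∑ s ∈ Finset.range t, cnt ω ((r + s) % L) := by
  simp only [Nf, Finset.sum_range_add]

lemma Epred_rot_iff (ω : Fin m → Fin L) {r : ℕ} (hr : r < L) :
    Epred L (rot r ω) ↔ ∀ t, 1 ≤ t → t ≤ L → Tf ω r < Tf ω (r + t) := by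
  constructor
  · intro h t h1 h2
    have hc := h t h1 h2
    rw [count_rot ω hr h2] at hc
    have hw := Nf_window ω r t
    simp only [Tf]; push_cast; omega
  · intro h t h1 h2
    have hc := h t h1 h2
    rw [count_rot ω hr h2]
    have hw := Nf_window ω r t
    simp only [Tf] at hc; push_cast at hc; omega

/-- unbounded goodness -/
def Pg (ω : Fin m → Fin L) (r : ℕ) : Prop := ∀ k, r < k → Tf ω r < Tf ω k

lemma window_iff (ω : Fin m → Fin L) (hm : m < L) (r : ℕ) :
    (∀ t, 1 ≤ t → t ≤ L → Tf ω r < Tf ω (r + t)) ↔ Pg ω r := by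
  constructor
  · intro h k
    induction k using Nat.strong_induction_on with
    | _ k ih =>
      intro hk
      rcases le_or_gt k (r + L) with h1 | h1
      · have := h (k - r) (by omega) (by omega)
        rwa [Nat.add_sub_cancel' (by omega : r ≤ k)] at this
      · have hkL : k - L + L = k := by omega
        have := Tf_add_L ω (k - L)
        rw [hkL] at this
        have h2 := ih (k - L) (by omega) (by omega)
        have hσ : (0:ℤ) < (L : ℤ) - m := by
          have : (m:ℤ) < L := by exact_mod_cast hm
          omega
        omega
  · intro h t h1 _
    exact h (r + t) (by omega)

lemma card_good (ω : Fin m → Fin L) (hm : m < L) (hL : 0 < L) :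
    ((Finset.range L).filter (fun r => Pg ω r)).card = L - m := by
  classical
  obtain ⟨r₀, hr₀mem, hr₀min⟩ := Finset.exists_min_image (Finset.range L) (Tf ω)
    ⟨0, Finset.mem_range.mpr hL⟩
  have hr₀L : r₀ < L := Finset.mem_range.mp hr₀mem
  set σ : ℤ := (L : ℤ) - m with hσdef
  have hσpos : 0 < σ := by
    have : (m:ℤ) < L := by exact_mod_cast hm
    omega
  set v₀ : ℤ := Tf ω r₀ with hv₀
  have key : ((Finset.range L).filter (fun r => Pg ω r)).card
      = (Finset.Ico v₀ (v₀ + σ)).card := by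
    apply Finset.card_nbij (fun r => Tf ω r)
    · intro r hr
      rw [Finset.mem_coe, Finset.mem_filter, Finset.mem_range] at hr
      obtain ⟨hrL, hPg⟩ := hr
      rw [Finset.mem_coe, Finset.mem_Ico]
      beta_reduce
      constructor
      · exact hr₀min r (Finset.mem_range.mpr hrL)
      · have h1 := hPg (r₀ + L) (by omega)
        have h2 := Tf_add_L ω r₀
        omega
    · intro r hr r' hr' heq
      rw [Finset.mem_coe, Finset.mem_filter, Finset.mem_range] at hr hr'
      by_contra hne
      rcases Nat.lt_or_ge r r' with h | h
      · exact absurd heq (ne_of_lt (hr.2 r' h))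
      · have hlt : r' < r := by omega
        exact absurd heq.symm (ne_of_lt (hr'.2 r hlt))
    · rintro v hv
      simp only [Finset.coe_Ico, Set.mem_Ico] at hv
      obtain ⟨hv1, hv2⟩ := hv
      set S : Finset ℕ := (Finset.range (2 * L)).filter (fun k => Tf ω k ≤ v) with hS
      have hr₀S : r₀ ∈ S := by
        simp only [hS, Finset.mem_filter, Finset.mem_range]
        exact ⟨by omega, by omega⟩
      have hSne : S.Nonempty := ⟨r₀, hr₀S⟩
      set r : ℕ := S.max' hSne with hrdef
      have hrS : r ∈ S := S.max'_mem hSne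
      have hr2L : r < 2 * L := by
        have := hrS; simp only [hS, Finset.mem_filter, Finset.mem_range] at this
        exact this.1
      have hrv : Tf ω r ≤ v := by
        have := hrS; simp only [hS, Finset.mem_filter, Finset.mem_range] at this
        exact this.2
      have hrL : r < L := by
        by_contra hge
        push_neg at hge
        have hk : r - L + L = r := by omega
        have h2 := Tf_add_L ω (r - L)
        rw [hk] at h2
        have h3 : Tf ω (r - L) ≤ v - σ := by omega
        have h4 := hr₀min (r - L) (Finset.mem_range.mpr (by omega))
        omega
      have hkey : ∀ k, r < k → v < Tf ω k := by
        intro k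
        induction k using Nat.strong_induction_on with
        | _ k ih =>
          intro hk
          rcases Nat.lt_or_ge k (2 * L) with h1 | h1
          · by_contra hle
            push_neg at hle
            have hkS : k ∈ S := by
              simp only [hS, Finset.mem_filter, Finset.mem_range]
              exact ⟨h1, hle⟩
            have := S.le_max' k hkS
            omega
          · have hkL : k - L + L = k := by omega
            have h2 := Tf_add_L ω (k - L)
            rw [hkL] at h2
            have h3 := ih (k - L) (by omega) (by omega)
            omega
      have hTr : Tf ω r = v := by
        have h1 := hkey (r + 1) (by omega)
        have h2 := Tf_succ_le ω r
        omega
      refine ⟨r, ?_, hTr⟩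
      rw [Finset.mem_coe, Finset.mem_filter, Finset.mem_range]
      refine ⟨hrL, ?_⟩
      intro k hk
      rw [hTr]
      exact hkey k hk
  rw [key, Int.card_Ico]
  omega

lemma card_Erot (ω : Fin m → Fin L) (hm : m < L) (hL : 0 < L) :
    ((Finset.range L).filter (fun r => Epred L (rot r ω))).card = L - m := by
  have hcong : ∀ r ∈ Finset.range L, (Epred L (rot r ω)) ↔ Pg ω r := by
    intro r hr
    have hrL : r < L := Finset.mem_range.mp hr
    rw [Epred_rot_iff ω hrL, window_iff ω hm]
  rw [Finset.filter_congr hcong]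
  exact card_good ω hm hL


-- rotation is a bijection on configurations
lemma card_rot_fiber (hL : 0 < L) {r : ℕ} (hr : r < L) :
    ((Finset.univ : Finset (Fin m → Fin L)).filter (fun ω => Epred L (rot r ω))).card
      = ((Finset.univ : Finset (Fin m → Fin L)).filter (fun ω => Epred L ω)).card := by
  have hπinj : Function.Injective (fun x : Fin L => (⟨((x : ℕ) + (L - r)) % L,
      Nat.mod_lt _ hL⟩ : Fin L)) := by
    intro x y hxy
    have hx := x.isLt
    have hy := y.isLt
    simp only [Fin.mk.injEq] at hxy
    have h1 : (x : ℕ) = (r + ((y : ℕ) + (L - r)) % L) % L :=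
      (mod_shift_eq hx hr (Nat.mod_lt _ hL)).mp hxy
    have h2 : (y : ℕ) = (r + ((y : ℕ) + (L - r)) % L) % L :=
      (mod_shift_eq hy hr (Nat.mod_lt _ hL)).mp rfl
    exact Fin.ext (h1.trans h2.symm)
  have hπbij := (Finite.injective_iff_bijective).mp hπinj
  set e : Fin L ≃ Fin L := Equiv.ofBijective _ hπbij with he
  have hrot : ∀ ω : Fin m → Fin L, rot r ω = fun j => e (ω j) := by
    intro ω; rfl
  apply Finset.card_nbij' (fun ω => fun j => e (ω j)) (fun ω => fun j => e.symm (ω j))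
  · intro ω hω
    rw [Finset.mem_coe, Finset.mem_filter] at hω ⊢
    refine ⟨Finset.mem_univ _, ?_⟩
    have := hω.2
    rwa [hrot ω] at this
  · intro ω hω
    rw [Finset.mem_coe, Finset.mem_filter] at hω ⊢
    refine ⟨Finset.mem_univ _, ?_⟩
    rw [hrot]
    have : (fun j => e (e.symm (ω j))) = ω := by
      funext j; simp
    rw [this]
    exact hω.2
  · intro ω _; funext j; simp
  · intro ω _; funext j; simp

lemma Ecard_mul (hL : 0 < L) :
    ((Finset.univ : Finset (Fin m → Fin L)).filter (fun ω => Epred L ω)).card * L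
      = (L - m) * L ^ m := by
  rcases Nat.lt_or_ge m L with hm | hm
  · -- double counting
    have h1 : ∑ r ∈ Finset.range L,
        ((Finset.univ : Finset (Fin m → Fin L)).filter (fun ω => Epred L (rot r ω))).card
        = ((Finset.univ : Finset (Fin m → Fin L)).filter (fun ω => Epred L ω)).card * L := by
      rw [Finset.sum_congr rfl (fun r hr => card_rot_fiber hL (Finset.mem_range.mp hr))]
      simp [Finset.sum_const, mul_comm]
    have h2 : ∑ r ∈ Finset.range L,
        ((Finset.univ : Finset (Fin m → Fin L)).filter (fun ω => Epred L (rot r ω))).card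
        = ∑ ω : Fin m → Fin L,
          ((Finset.range L).filter (fun r => Epred L (rot r ω))).card := by
      simp only [Finset.card_filter]
      rw [Finset.sum_comm]
    have h3 : ∑ ω : Fin m → Fin L,
        ((Finset.range L).filter (fun r => Epred L (rot r ω))).card = (L - m) * L ^ m := by
      rw [Finset.sum_congr rfl (fun ω _ => card_Erot ω hm hL)]
      simp [Finset.sum_const, Finset.card_univ, mul_comm]
    omega
  · -- m ≥ L : event is impossible
    have hE : ∀ ω : Fin m → Fin L, ¬ Epred L ω := by
      intro ω hE
      have := hE L hL (le_refl L)
      have hfull : (Finset.univ.filter (fun j => ((ω j : ℕ) < L))) = Finset.univ := by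
        apply Finset.filter_true_of_mem
        intro j _; exact (ω j).isLt
      rw [hfull, Finset.card_univ] at this
      simp only [Fintype.card_fin] at this
      omega
    have : ((Finset.univ : Finset (Fin m → Fin L)).filter (fun ω => Epred L ω)) = ∅ := by
      apply Finset.filter_false_of_mem
      intro ω _; exact hE ω
    rw [this]
    simp [Nat.sub_eq_zero_of_le hm]

lemma ind_eq_card {α : Type*} [Fintype α] (P : α → Prop) :
    ∑ x : α, ind (P x) = ((Finset.univ : Finset α).filter (fun x => P x)).card := by
  rw [Finset.card_filter]
  push_cast
  apply Finset.sum_congr rfl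
  intro x _
  simp [ind]

lemma uniform_value (hL : 0 < L) :
    fixedRightProb L m (fun _ => (L : ℝ)⁻¹) = ((L - m : ℕ) : ℝ) / L := by
  classical
  have hLR : (0:ℝ) < L := by exact_mod_cast hL
  set C : ℕ := ((Finset.univ : Finset (Fin m → Fin L)).filter (fun ω => Epred L ω)).card
    with hC
  have h1 : fixedRightProb L m (fun _ => (L : ℝ)⁻¹) = ((L:ℝ)⁻¹) ^ m * C := by
    rw [fixedRightProb]
    calc ∑ ω : Fin m → Fin L, (∏ _j : Fin m, (L:ℝ)⁻¹) *
          ind (∀ t, 1 ≤ t → t ≤ L →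
            (Finset.univ.filter (fun j => ((ω j : ℕ) < t))).card < t)
        = ∑ ω : Fin m → Fin L, ((L:ℝ)⁻¹) ^ m * ind (Epred L ω) := by
          apply Finset.sum_congr rfl
          intro ω _
          rw [Finset.prod_const]
          simp [Epred]
      _ = ((L:ℝ)⁻¹) ^ m * ∑ ω : Fin m → Fin L, ind (Epred L ω) := by
          rw [Finset.mul_sum]
      _ = ((L:ℝ)⁻¹) ^ m * C := by rw [ind_eq_card]
  have h2 := Ecard_mul (L := L) (m := m) hL
  have h2R : (C : ℝ) * L = ((L - m : ℕ) : ℝ) * (L:ℝ) ^ m := by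
    rw [hC]
    exact_mod_cast h2
  have hLm : (0:ℝ) < (L:ℝ) ^ m := pow_pos hLR m
  rw [h1, inv_pow, eq_div_iff (ne_of_gt hLR)]
  rw [mul_assoc]
  rw [inv_mul_eq_iff_eq_mul₀ (ne_of_gt hLm)]
  linarith [h2R]


lemma ind_nonneg (P : Prop) : 0 ≤ ind P := by
  classical
  rw [ind]; split <;> norm_num

lemma ind_le_ind {P Q : Prop} (h : P → Q) : ind P ≤ ind Q := by
  classical
  rw [ind, ind]
  split
  · rename_i hP
    rw [if_pos (h hP)]
  · split <;> norm_num

/-- pushing a product measure forward along a map of atoms -/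
lemma pushforward {A : Type*} [Fintype A] (L m : ℕ) (q : A → ℝ) (a : A → Fin L)
    (p : ℕ → ℝ) (hq : ∀ i : Fin L, ∑ x ∈ Finset.univ.filter (fun x => a x = i), q x = p (i : ℕ))
    (G : (Fin m → Fin L) → ℝ) :
    ∑ σ : Fin m → A, (∏ j, q (σ j)) * G (fun j => a (σ j))
      = ∑ ω : Fin m → Fin L, (∏ j, p ((ω j : ℕ))) * G ω := by
  classical
  have hmap : ∀ σ : Fin m → A, σ ∈ (Finset.univ : Finset (Fin m → A)) →
      (fun j => a (σ j)) ∈ (Finset.univ : Finset (Fin m → Fin L)) := fun _ _ => Finset.mem_univ _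
  rw [← Finset.sum_fiberwise_of_maps_to hmap (fun σ => (∏ j, q (σ j)) * G (fun j => a (σ j)))]
  apply Finset.sum_congr rfl
  intro ω _
  have hfib : (Finset.univ : Finset (Fin m → A)).filter (fun σ => (fun j => a (σ j)) = ω)
      = Fintype.piFinset (fun j => Finset.univ.filter (fun x => a x = ω j)) := by
    ext σ
    simp only [Finset.mem_filter, Finset.mem_univ, true_and, Fintype.mem_piFinset, funext_iff]
  rw [hfib]
  have : ∀ σ ∈ Fintype.piFinset (fun j => Finset.univ.filter (fun x => a x = ω j)),
      (∏ j, q (σ j)) * G (fun j => a (σ j)) = (∏ j, q (σ j)) * G ω := by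
    intro σ hσ
    rw [Fintype.mem_piFinset] at hσ
    have : (fun j => a (σ j)) = ω := by
      funext j
      have := hσ j
      rw [Finset.mem_filter] at this
      exact this.2
    rw [this]
  rw [Finset.sum_congr rfl this, ← Finset.sum_mul, ← Finset.prod_univ_sum]
  congr 1
  apply Finset.prod_congr rfl
  intro j _
  exact hq (ω j)

/-- min/max interval-intersection identity -/
lemma minmax_lemma (c d u v : ℝ) (hcd : c ≤ d) (huv : u ≤ v) :
    max 0 (min d v - max c u) = min d (max c v) - min d (max c u) := by
  rcases le_total c u with h1 | h1 <;> rcases le_total c v with h2 | h2 <;>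
    rcases le_total d u with h3 | h3 <;> rcases le_total d v with h4 | h4 <;>
    simp [max_def, min_def] <;> split_ifs <;> linarith

lemma minmax_lemma' (c d u v : ℝ) (hcd : c ≤ d) (huv : u ≤ v) :
    max 0 (min d v - max c u) = min v (max u d) - min v (max u c) := by
  rw [show min d v = min v d from min_comm _ _, show max c u = max u c from max_comm _ _]
  exact minmax_lemma u v c d huv hcd

/-- the comparison lemma -/
lemma compare (L L' m : ℕ) (p p' : ℕ → ℝ) (hL : 0 < L) (hL' : 0 < L')
    (hp : ∀ i < L, 0 ≤ p i) (hp' : ∀ i < L', 0 ≤ p' i)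
    (hs : ∑ i ∈ Finset.range L, p i = 1) (hs' : ∑ i ∈ Finset.range L', p' i = 1)
    (hkey : ∀ t, 1 ≤ t → t ≤ L' → m < t ∨
      (t ≤ L ∧ (∑ i ∈ Finset.range t, p' i) ≤ ∑ i ∈ Finset.range t, p i)) :
    fixedRightProb L m p ≤ fixedRightProb L' m p' := by
  classical
  set F : ℕ → ℝ := fun t => ∑ i ∈ Finset.range t, p i with hF
  set F' : ℕ → ℝ := fun t => ∑ i ∈ Finset.range t, p' i with hF'
  have hFmono : ∀ s t : ℕ, s ≤ t → t ≤ L → F s ≤ F t := by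
    intro s t hst htL
    apply Finset.sum_le_sum_of_subset_of_nonneg (Finset.range_subset_range.mpr hst)
    intro i hi _
    exact hp i (by have := Finset.mem_range.mp hi; omega)
  have hF'mono : ∀ s t : ℕ, s ≤ t → t ≤ L' → F' s ≤ F' t := by
    intro s t hst htL
    apply Finset.sum_le_sum_of_subset_of_nonneg (Finset.range_subset_range.mpr hst)
    intro i hi _
    exact hp' i (by have := Finset.mem_range.mp hi; omega)
  have hF0 : F 0 = 0 := by simp [hF]
  have hF'0 : F' 0 = 0 := by simp [hF']
  have hFL : F L = 1 := hs
  have hF'L : F' L' = 1 := hs'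
  set q : Fin L × Fin L' → ℝ :=
    fun x => max 0 (min (F ((x.1 : ℕ) + 1)) (F' ((x.2 : ℕ) + 1))
      - max (F (x.1 : ℕ)) (F' (x.2 : ℕ))) with hq
  have hqnn : ∀ x, 0 ≤ q x := fun x => le_max_left _ _
  -- fiber sums over second coordinate: ∑_k q (i,k) = p i
  have hfib1 : ∀ i : Fin L, ∑ x ∈ Finset.univ.filter (fun x : Fin L × Fin L' => x.1 = i), q x
      = p (i : ℕ) := by
    intro i
    have h1 : ∑ x ∈ Finset.univ.filter (fun x : Fin L × Fin L' => x.1 = i), q x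
        = ∑ k : Fin L', q (i, k) := by
      rw [Finset.sum_filter, Fintype.sum_prod_type]
      rw [Finset.sum_eq_single i]
      · simp
      · intro b _ hb
        apply Finset.sum_eq_zero
        intro k _
        rw [if_neg hb]
      · intro h; exact absurd (Finset.mem_univ i) h
    rw [h1]
    have h2 : ∀ k : Fin L', q (i, k)
        = (fun x => min (F ((i:ℕ)+1)) (max (F (i:ℕ)) x)) (F' ((k:ℕ)+1))
          - (fun x => min (F ((i:ℕ)+1)) (max (F (i:ℕ)) x)) (F' (k:ℕ)) := by
      intro k
      simp only [hq]
      exact minmax_lemma _ _ _ _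
        (hFmono (i:ℕ) ((i:ℕ)+1) (by omega) (by have := i.isLt; omega))
        (hF'mono (k:ℕ) ((k:ℕ)+1) (by omega) (by have := k.isLt; omega))
    rw [Finset.sum_congr rfl (fun k _ => h2 k)]
    rw [Fin.sum_univ_eq_sum_range
      (fun k => (fun x => min (F ((i:ℕ)+1)) (max (F (i:ℕ)) x)) (F' (k+1))
        - (fun x => min (F ((i:ℕ)+1)) (max (F (i:ℕ)) x)) (F' k))]
    rw [Finset.sum_range_sub (fun k => (fun x => min (F ((i:ℕ)+1)) (max (F (i:ℕ)) x)) (F' k))]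
    simp only [hF'0, hF'L]
    have hi1L : (i:ℕ) + 1 ≤ L := i.isLt
    have hFi0 : 0 ≤ F (i:ℕ) := by
      rw [← hF0]; exact hFmono 0 (i:ℕ) (by omega) (by omega)
    have hFi1 : F ((i:ℕ)+1) ≤ 1 := by
      rw [← hFL]; exact hFmono ((i:ℕ)+1) L hi1L (le_refl L)
    have hFii : F (i:ℕ) ≤ F ((i:ℕ)+1) := hFmono _ _ (by omega) hi1L
    have hFile : F (i:ℕ) ≤ 1 := le_trans hFii hFi1
    rw [max_eq_right hFile, min_eq_left hFi1, max_eq_left hFi0, min_eq_right hFii]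
    simp only [hF]
    rw [Finset.sum_range_succ]
    ring
  -- fiber sums over first coordinate: ∑_i q (i,k) = p' k
  have hfib2 : ∀ k : Fin L', ∑ x ∈ Finset.univ.filter (fun x : Fin L × Fin L' => x.2 = k), q x
      = p' (k : ℕ) := by
    intro k
    have h1 : ∑ x ∈ Finset.univ.filter (fun x : Fin L × Fin L' => x.2 = k), q x
        = ∑ i : Fin L, q (i, k) := by
      rw [Finset.sum_filter, Fintype.sum_prod_type]
      apply Finset.sum_congr rfl
      intro i _
      rw [Finset.sum_eq_single k]
      · simp
      · intro b _ hb
        rw [if_neg hb]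
      · intro h; exact absurd (Finset.mem_univ k) h
    rw [h1]
    have h2 : ∀ i : Fin L, q (i, k)
        = (fun x => min (F' ((k:ℕ)+1)) (max (F' (k:ℕ)) x)) (F ((i:ℕ)+1))
          - (fun x => min (F' ((k:ℕ)+1)) (max (F' (k:ℕ)) x)) (F (i:ℕ)) := by
      intro i
      simp only [hq]
      exact minmax_lemma' _ _ _ _
        (hFmono (i:ℕ) ((i:ℕ)+1) (by omega) (by have := i.isLt; omega))
        (hF'mono (k:ℕ) ((k:ℕ)+1) (by omega) (by have := k.isLt; omega))
    rw [Finset.sum_congr rfl (fun i _ => h2 i)]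
    rw [Fin.sum_univ_eq_sum_range
      (fun i => (fun x => min (F' ((k:ℕ)+1)) (max (F' (k:ℕ)) x)) (F (i+1))
        - (fun x => min (F' ((k:ℕ)+1)) (max (F' (k:ℕ)) x)) (F i))]
    rw [Finset.sum_range_sub (fun i => (fun x => min (F' ((k:ℕ)+1)) (max (F' (k:ℕ)) x)) (F i))]
    simp only [hF0, hFL]
    have hk1L : (k:ℕ) + 1 ≤ L' := k.isLt
    have hFk0 : 0 ≤ F' (k:ℕ) := by
      rw [← hF'0]; exact hF'mono 0 (k:ℕ) (by omega) (by omega)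
    have hFk1 : F' ((k:ℕ)+1) ≤ 1 := by
      rw [← hF'L]; exact hF'mono ((k:ℕ)+1) L' hk1L (le_refl L')
    have hFkk : F' (k:ℕ) ≤ F' ((k:ℕ)+1) := hF'mono _ _ (by omega) hk1L
    have hFkle : F' (k:ℕ) ≤ 1 := le_trans hFkk hFk1
    rw [max_eq_right hFkle, min_eq_left hFk1, max_eq_left hFk0, min_eq_right hFkk]
    simp only [hF']
    rw [Finset.sum_range_succ]
    ring
  -- express both probabilities as pushforwards of the coupling
  set G₁ : (Fin m → Fin L) → ℝ := fun ω => ind (∀ t, 1 ≤ t → t ≤ L →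
    (Finset.univ.filter (fun j => ((ω j : ℕ) < t))).card < t) with hG₁
  set G₂ : (Fin m → Fin L') → ℝ := fun ω => ind (∀ t, 1 ≤ t → t ≤ L' →
    (Finset.univ.filter (fun j => ((ω j : ℕ) < t))).card < t) with hG₂
  have e1 : fixedRightProb L m p
      = ∑ σ : Fin m → (Fin L × Fin L'), (∏ j, q (σ j)) * G₁ (fun j => (σ j).1) :=
    (pushforward L m q Prod.fst p hfib1 G₁).symm
  have e2 : fixedRightProb L' m p'
      = ∑ σ : Fin m → (Fin L × Fin L'), (∏ j, q (σ j)) * G₂ (fun j => (σ j).2) :=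
    (pushforward L' m q Prod.snd p' hfib2 G₂).symm
  rw [e1, e2]
  apply Finset.sum_le_sum
  intro σ _
  have hqprod : 0 ≤ ∏ j, q (σ j) := Finset.prod_nonneg (fun j _ => hqnn (σ j))
  rcases eq_or_lt_of_le hqprod with hz | hpos
  · rw [← hz]; simp
  · apply mul_le_mul_of_nonneg_left _ (le_of_lt hpos)
    apply ind_le_ind
    intro hE1 t ht1 htL'
    rcases hkey t ht1 htL' with hmt | ⟨htL, hFF⟩
    · calc (Finset.univ.filter (fun j => (((σ j).2 : ℕ) < t))).card
          ≤ (Finset.univ : Finset (Fin m)).card := Finset.card_filter_le _ _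
        _ = m := by simp
        _ < t := hmt
    · have hqpos : ∀ j, 0 < q (σ j) := by
        intro j
        rcases (hqnn (σ j)).lt_or_eq with h | h
        · exact h
        · exfalso
          have : (∏ j, q (σ j)) = 0 := Finset.prod_eq_zero (Finset.mem_univ j) h.symm
          rw [this] at hpos; exact lt_irrefl 0 hpos
      have hsub : (Finset.univ.filter (fun j => (((σ j).2 : ℕ) < t)))
          ⊆ (Finset.univ.filter (fun j => (((σ j).1 : ℕ) < t))) := by
        intro j hj
        rw [Finset.mem_filter] at hj ⊢
        refine ⟨Finset.mem_univ _, ?_⟩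
        obtain ⟨_, hk⟩ := hj
        set i : ℕ := ((σ j).1 : ℕ)
        set k : ℕ := ((σ j).2 : ℕ)
        have hqj := hqpos j
        have hins : max (F i) (F' k) < min (F (i+1)) (F' (k+1)) := by
          simp only [hq] at hqj
          rcases max_cases (0:ℝ) (min (F (i+1)) (F' (k+1)) - max (F i) (F' k)) with
            ⟨heq, hle⟩ | ⟨heq, hlt⟩
          · rw [heq] at hqj; linarith
          · linarith
        have h3 : F i < F' (k+1) :=
          lt_of_le_of_lt (le_max_left _ _) (lt_of_lt_of_le hins (min_le_right _ _))
        have h4 : F' (k+1) ≤ F' t := hF'mono (k+1) t (by omega) htL'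
        have h5 : F i < F t := lt_of_lt_of_le h3 (le_trans h4 hFF)
        by_contra hcon
        push_neg at hcon
        have : F t ≤ F i := hFmono t i hcon
          (by have := ((σ j).1).isLt; omega)
        linarith
      calc (Finset.univ.filter (fun j => (((σ j).2 : ℕ) < t))).card
          ≤ (Finset.univ.filter (fun j => (((σ j).1 : ℕ) < t))).card :=
            Finset.card_le_card hsub
        _ < t := hE1 t ht1 htL


lemma key_upper (δ εr Lr L1 mr : ℝ)
    (hδpos : 0 < δ) (hδ8 : δ ≤ 1 / 8) (hε : 0 < εr) (hε2 : εr < 1 / 2)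
    (hLr : 1 ≤ Lr) (hδεL : 100 ≤ δ * (εr * Lr))
    (hL1ge : Lr / (1 - δ * εr) ≤ L1) (hL1le : L1 ≤ Lr / (1 - δ * εr) + 1)
    (hmlb : mr ≥ Lr * (1 - εr - δ * εr)) :
    L1 - mr ≤ (1 + 5 * δ) * (εr * L1) := by
  have hδε : δ * εr < 1 / 16 := by nlinarith
  have h1δε : (0:ℝ) < 1 - δ * εr := by linarith
  have hLrpos : (0:ℝ) < Lr := by linarith
  have hX : (0:ℝ) < 1 - εr - 5 * (δ * εr) := by nlinarith
  have hX1 : 1 - εr - 5 * (δ * εr) ≤ 1 := by nlinarith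
  have c1 : L1 * (1 - εr - 5 * (δ * εr))
      ≤ (Lr / (1 - δ * εr) + 1) * (1 - εr - 5 * (δ * εr)) :=
    mul_le_mul_of_nonneg_right hL1le (le_of_lt hX)
  have c2 : (Lr / (1 - δ * εr)) * (1 - εr - 5 * (δ * εr))
      ≤ Lr * (1 - εr - 3 * (δ * εr)) := by
    rw [div_mul_eq_mul_div, div_le_iff₀ h1δε]
    have expand : Lr * (1 - εr - 3 * (δ * εr)) * (1 - δ * εr) - Lr * (1 - εr - 5 * (δ * εr))
        = Lr * ((δ * εr) + (δ * εr) * εr + 3 * (δ * εr) ^ 2) := by ring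
    nlinarith [mul_nonneg (le_of_lt hLrpos)
      (by positivity : (0:ℝ) ≤ (δ * εr) + (δ * εr) * εr + 3 * (δ * εr) ^ 2)]
  have c3 : Lr * (1 - εr - 3 * (δ * εr)) + 1 ≤ Lr * (1 - εr - δ * εr) := by
    nlinarith
  have hfin : L1 * (1 - εr - 5 * (δ * εr)) ≤ mr := by nlinarith
  nlinarith

lemma key_lower (δ εr Lr L2 mr : ℝ)
    (hδpos : 0 < δ) (hδ8 : δ ≤ 1 / 8) (hε : 0 < εr) (hε2 : εr < 1 / 2)
    (hLr : 1 ≤ Lr) (hδεL : 100 ≤ δ * (εr * Lr))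
    (hL2le : L2 ≤ Lr / (1 + δ * εr)) (hL2lb : Lr * (1 - δ * εr) - 1 ≤ L2)
    (hmub : mr ≤ Lr * (1 - εr + δ * εr)) :
    (1 - 5 * δ) * (εr * L2) ≤ L2 - mr := by
  have hδε : δ * εr < 1 / 16 := by nlinarith
  have h2δε : (0:ℝ) < 1 + δ * εr := by positivity
  have hLrpos : (0:ℝ) < Lr := by linarith
  have hY : (0:ℝ) < 1 - εr + 5 * (δ * εr) := by nlinarith
  have hY1 : 1 - εr + 5 * (δ * εr) ≤ 1 := by nlinarith
  have c1 : (Lr * (1 - δ * εr) - 1) * (1 - εr + 5 * (δ * εr))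
      ≤ L2 * (1 - εr + 5 * (δ * εr)) :=
    mul_le_mul_of_nonneg_right hL2lb (le_of_lt hY)
  have c2 : Lr * (1 - εr + 3 * (δ * εr)) - 1
      ≤ (Lr * (1 - δ * εr) - 1) * (1 - εr + 5 * (δ * εr)) := by
    have expand : (Lr * (1 - δ * εr) - 1) * (1 - εr + 5 * (δ * εr))
        - (Lr * (1 - εr + 3 * (δ * εr)) - 1)
        = Lr * ((δ * εr) + (δ * εr) * εr - 5 * (δ * εr) ^ 2)
          + (εr - 5 * (δ * εr)) := by ring
    have h5 : (0:ℝ) ≤ (δ * εr) + (δ * εr) * εr - 5 * (δ * εr) ^ 2 := by nlinarith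
    nlinarith [mul_nonneg (le_of_lt hLrpos) h5]
  have c3 : mr ≤ Lr * (1 - εr + 3 * (δ * εr)) - 1 := by nlinarith
  have hfin : mr ≤ L2 * (1 - εr + 5 * (δ * εr)) := by linarith
  nlinarith


end CycleAux

section Main
open CycleAux

set_option maxHeartbeats 2000000 in
/-- Proposition `t25`: let `ε = ε(n) → 0⁺`, `L = L(n) → ∞` with
`L ε² → ∞`, let `m = m(n)` be integers with `m = L(1 - ε + o(ε))`, and let
`p_1^R, …, p_L^R` be probabilities summing to `1` with `p_i^R = 1/L + o(ε/L)`
uniformly in `i`.  Placing exactly `m` balls independently into the `L` bins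
according to these probabilities, the probability `f(m)` of `ESC_L^R` satisfies
`f(m) ∼ ε`. -/
theorem fixedRight_asymp (ε : ℕ → ℝ) (L m : ℕ → ℕ) (p : ℕ → ℕ → ℝ)
    (hεpos : ∀ n, 0 < ε n) (hε0 : Tendsto ε atTop (𝓝 0))
    (hL : Tendsto L atTop atTop)
    (hLε : Tendsto (fun n : ℕ => (L n : ℝ) * ε n ^ 2) atTop atTop)
    (hm : Tendsto (fun n : ℕ => ((m n : ℝ) - L n * (1 - ε n)) / (L n * ε n))
      atTop (𝓝 0))
    (hpnn : ∀ n, ∀ i < L n, 0 ≤ p n i)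
    (hpsum : ∀ n, ∑ i ∈ Finset.range (L n), p n i = 1)
    (hpunif : ∀ δ : ℝ, 0 < δ → ∀ᶠ n in atTop, ∀ i < L n,
        |p n i - (L n : ℝ)⁻¹| ≤ δ * ε n / L n) :
    Tendsto (fun n : ℕ => fixedRightProb (L n) (m n) (p n) / ε n)
      atTop (𝓝 1) := by
  rw [Metric.tendsto_nhds]
  intro e he
  set δ : ℝ := min (e / 10) (1 / 8) with hδdef
  have hδpos : 0 < δ := lt_min (by linarith) (by norm_num)
  have hδ8 : δ ≤ 1 / 8 := min_le_right _ _
  have hδe : 5 * δ < e := by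
    have : δ ≤ e / 10 := min_le_left _ _
    linarith
  have E1 := hpunif δ hδpos
  have E2 : ∀ᶠ n in atTop, |ε n - 0| < 1 / 2 :=
    (Metric.tendsto_nhds.mp hε0) (1 / 2) (by norm_num)
  have E3 : ∀ᶠ n in atTop, (L n : ℝ) * ε n ^ 2 ≥ 100 / δ :=
    hLε.eventually_ge_atTop _
  have E4 : ∀ᶠ n in atTop,
      |((m n : ℝ) - L n * (1 - ε n)) / (L n * ε n) - 0| < δ :=
    (Metric.tendsto_nhds.mp hm) δ hδpos
  have E5 : ∀ᶠ n in atTop, 1 ≤ L n := hL.eventually_ge_atTop 1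
  filter_upwards [E1, E2, E3, E4, E5] with n h1 h2 h3 h4 h5
  -- notation
  have hε : 0 < ε n := hεpos n
  rw [sub_zero] at h2
  rw [abs_of_pos hε] at h2
  have hLpos : 0 < L n := h5
  have hLr : (1 : ℝ) ≤ (L n : ℝ) := by exact_mod_cast h5
  have hLrpos : (0 : ℝ) < (L n : ℝ) := by linarith
  -- ε L is large
  have hεLpos : (0:ℝ) < ε n * L n := by positivity
  have hεL : 100 / δ ≤ ε n * L n := by
    have h6 : (L n : ℝ) * ε n ^ 2 ≤ ε n * L n := by
      nlinarith [mul_nonneg (le_of_lt hεLpos) (by linarith : (0:ℝ) ≤ 1 - ε n)]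
    linarith
  have hεLbig : 100 ≤ ε n * L n := by
    have : 100 / δ ≥ 100 := by
      rw [ge_iff_le, le_div_iff₀ hδpos]; nlinarith
    linarith
  have hδεL : 100 ≤ δ * (ε n * L n) := by
    rw [div_le_iff₀ hδpos] at hεL
    nlinarith
  have hδε : δ * ε n < 1 / 16 := by nlinarith
  have hδεpos : 0 < δ * ε n := by positivity
  -- m bounds
  have hmabs : |(m n : ℝ) - L n * (1 - ε n)| < δ * (L n * ε n) := by
    rw [sub_zero, abs_div] at h4
    have hpos : 0 < (L n : ℝ) * ε n := by positivity
    rw [div_lt_iff₀ (by rwa [abs_of_pos hpos])] at h4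
    calc |(m n : ℝ) - L n * (1 - ε n)| < δ * |(L n : ℝ) * ε n| := h4
      _ = δ * (L n * ε n) := by rw [abs_of_pos hpos]
  have hmub : (m n : ℝ) ≤ L n * (1 - ε n + δ * ε n) := by
    have := (abs_lt.mp hmabs).2; nlinarith
  have hmlb : (m n : ℝ) ≥ L n * (1 - ε n - δ * ε n) := by
    have := (abs_lt.mp hmabs).1; nlinarith
  -- the two auxiliary grids
  set L₁ : ℕ := ⌈(L n : ℝ) / (1 - δ * ε n)⌉₊ with hL₁def
  set L₂ : ℕ := ⌊(L n : ℝ) / (1 + δ * ε n)⌋₊ with hL₂def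
  have h1δε : (0 : ℝ) < 1 - δ * ε n := by linarith
  have h2δε : (0 : ℝ) < 1 + δ * ε n := by linarith
  have hL₁ge : (L n : ℝ) / (1 - δ * ε n) ≤ (L₁ : ℝ) := Nat.le_ceil _
  have hL₁le : (L₁ : ℝ) ≤ (L n : ℝ) / (1 - δ * ε n) + 1 :=
    le_of_lt (Nat.ceil_lt_add_one (by positivity))
  have hL₂le : (L₂ : ℝ) ≤ (L n : ℝ) / (1 + δ * ε n) :=
    Nat.floor_le (by positivity)
  have hL₂ge : (L n : ℝ) / (1 + δ * ε n) - 1 ≤ (L₂ : ℝ) := by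
    have := Nat.lt_floor_add_one ((L n : ℝ) / (1 + δ * ε n))
    linarith
  clear_value L₁ L₂
  have hL₂lb : (L n : ℝ) * (1 - δ * ε n) - 1 ≤ (L₂ : ℝ) := by
    have : (L n : ℝ) * (1 - δ * ε n) ≤ (L n : ℝ) / (1 + δ * ε n) := by
      rw [le_div_iff₀ h2δε]; nlinarith
    linarith
  have hL₁ub : (L₁ : ℝ) ≤ (L n : ℝ) * (1 + 2 * (δ * ε n)) + 1 := by
    have : (L n : ℝ) / (1 - δ * ε n) ≤ (L n : ℝ) * (1 + 2 * (δ * ε n)) := by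
      rw [div_le_iff₀ h1δε]; nlinarith
    linarith
  have hLleL₁ : (L n : ℝ) ≤ (L₁ : ℝ) := by
    have : (L n : ℝ) ≤ (L n : ℝ) / (1 - δ * ε n) := by
      rw [le_div_iff₀ h1δε]; nlinarith
    linarith
  have hL₂leL : (L₂ : ℝ) ≤ (L n : ℝ) := by
    have : (L n : ℝ) / (1 + δ * ε n) ≤ (L n : ℝ) := by
      rw [div_le_iff₀ h2δε]; nlinarith
    linarith
  have hεLr : 100 / δ ≤ ε n * L n := hεL
  have hL₂posR : (0 : ℝ) < (L₂ : ℝ) := by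
    have hd : δ * ε n * (L n : ℝ) ≥ 100 := by nlinarith
    nlinarith
  have hL₂pos : 0 < L₂ := Nat.cast_pos.mp hL₂posR
  have hL₁posR : (0 : ℝ) < (L₁ : ℝ) := lt_of_lt_of_le hLrpos hLleL₁
  have hL₁pos : 0 < L₁ := Nat.cast_pos.mp hL₁posR
  -- m + 1 ≤ L₂ (in ℝ then ℕ)
  have hmL₂R : (m n : ℝ) + 1 ≤ (L₂ : ℝ) := by
    have key : (L n : ℝ) * (1 - ε n + δ * ε n) + 2 ≤ (L n : ℝ) * (1 - δ * ε n) := by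
      have : (L n : ℝ) * (ε n * (1 - 2 * δ)) ≥ 2 := by nlinarith
      nlinarith
    linarith
  have hmL₂ : m n + 1 ≤ L₂ := by exact_mod_cast hmL₂R
  have hmleL : m n ≤ L n := by
    have : (L₂ : ℝ) ≤ (L n : ℝ) := hL₂leL
    have h' : L₂ ≤ L n := by exact_mod_cast this
    omega
  have hmleL₁ : m n ≤ L₁ := by
    have h' : (L n : ℝ) ≤ (L₁ : ℝ) := hLleL₁
    have h'' : L n ≤ L₁ := by exact_mod_cast h'
    omega
  -- partial sums of p are close to linear
  have hFdiff : ∀ t : ℕ, t ≤ L n →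
      |(∑ i ∈ Finset.range t, p n i) - t / (L n : ℝ)| ≤ t * (δ * ε n) / L n := by
    intro t ht
    have hrw : (∑ i ∈ Finset.range t, p n i) - t / (L n : ℝ)
        = ∑ i ∈ Finset.range t, (p n i - ((L n : ℝ))⁻¹) := by
      rw [Finset.sum_sub_distrib, Finset.sum_const, Finset.card_range, nsmul_eq_mul]
      rw [div_eq_mul_inv]
    rw [hrw]
    calc |∑ i ∈ Finset.range t, (p n i - ((L n : ℝ))⁻¹)|
        ≤ ∑ i ∈ Finset.range t, |p n i - ((L n : ℝ))⁻¹| :=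
          Finset.abs_sum_le_sum_abs _ _
      _ ≤ ∑ _i ∈ Finset.range t, δ * ε n / (L n : ℝ) := by
          apply Finset.sum_le_sum
          intro i hi
          exact h1 i (lt_of_lt_of_le (Finset.mem_range.mp hi) ht)
      _ = t * (δ * ε n) / (L n : ℝ) := by
          rw [Finset.sum_const, Finset.card_range, nsmul_eq_mul]
          ring
  -- upper comparison
  have hup : fixedRightProb (L n) (m n) (p n)
      ≤ fixedRightProb L₁ (m n) (fun _ => (L₁ : ℝ)⁻¹) := by
    apply compare _ _ _ _ _ hLpos hL₁pos (hpnn n) (fun i _ => by positivity) (hpsum n)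
    · rw [Finset.sum_const, Finset.card_range, nsmul_eq_mul]
      exact mul_inv_cancel₀ (ne_of_gt hL₁posR)
    · intro t ht1 htL₁
      rcases le_or_gt t (L n) with htL | htL
      · right
        refine ⟨htL, ?_⟩
        have hsum : ∑ i ∈ Finset.range t, ((L₁ : ℝ))⁻¹ = (t : ℝ) / L₁ := by
          rw [Finset.sum_const, Finset.card_range, nsmul_eq_mul, div_eq_mul_inv]
        rw [hsum]
        have hFlb : (t : ℝ) / L n - t * (δ * ε n) / L n ≤ ∑ i ∈ Finset.range t, p n i := by
          have := (abs_le.mp (hFdiff t htL)).1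
          linarith
        have htpos : (0 : ℝ) < t := by exact_mod_cast ht1
        have step : (t : ℝ) / L₁ ≤ (t : ℝ) / L n - t * (δ * ε n) / L n := by
          rw [div_le_iff₀ hL₁posR]
          have expand : ((t : ℝ) / L n - t * (δ * ε n) / L n) * L₁
              = (t : ℝ) * ((1 - δ * ε n) * L₁ / L n) := by
            field_simp
          rw [expand]
          have : (1 : ℝ) ≤ (1 - δ * ε n) * L₁ / L n := by
            rw [le_div_iff₀ hLrpos]
            calc (1 : ℝ) * L n = L n := by ring
              _ ≤ (1 - δ * ε n) * L₁ := by
                  nlinarith [(div_le_iff₀ h1δε).mp hL₁ge]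
          nlinarith
        linarith
      · left
        omega
  -- lower comparison
  have hlo : fixedRightProb L₂ (m n) (fun _ => (L₂ : ℝ)⁻¹)
      ≤ fixedRightProb (L n) (m n) (p n) := by
    apply compare _ _ _ _ _ hL₂pos hLpos (fun i _ => by positivity) (hpnn n) ?_ (hpsum n)
    · intro t ht1 htL
      rcases le_or_gt t L₂ with htL₂ | htL₂
      · right
        refine ⟨htL₂, ?_⟩
        have hsum : ∑ i ∈ Finset.range t, ((L₂ : ℝ))⁻¹ = (t : ℝ) / L₂ := by
          rw [Finset.sum_const, Finset.card_range, nsmul_eq_mul, div_eq_mul_inv]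
        rw [hsum]
        have hFub : ∑ i ∈ Finset.range t, p n i ≤ (t : ℝ) / L n + t * (δ * ε n) / L n := by
          have := (abs_le.mp (hFdiff t htL)).2
          linarith
        have htpos : (0 : ℝ) < t := by exact_mod_cast ht1
        have step : (t : ℝ) / L n + t * (δ * ε n) / L n ≤ (t : ℝ) / L₂ := by
          rw [le_div_iff₀ hL₂posR]
          have expand : ((t : ℝ) / L n + t * (δ * ε n) / L n) * L₂
              = (t : ℝ) * ((1 + δ * ε n) * L₂ / L n) := by
            field_simp
          rw [expand]
          have : (1 + δ * ε n) * L₂ / L n ≤ 1 := by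
            rw [div_le_iff₀ hLrpos]
            calc (1 + δ * ε n) * L₂ ≤ L n := by
                  nlinarith [(le_div_iff₀ h2δε).mp hL₂le]
              _ = 1 * L n := by ring
          nlinarith
        linarith
      · left
        omega
    · rw [Finset.sum_const, Finset.card_range, nsmul_eq_mul]
      exact mul_inv_cancel₀ (ne_of_gt hL₂posR)
  -- exact values of the uniform probabilities
  have hv₁ : fixedRightProb L₁ (m n) (fun _ => (L₁ : ℝ)⁻¹) = ((L₁ : ℝ) - m n) / L₁ := by
    rw [uniform_value hL₁pos, Nat.cast_sub hmleL₁]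
  have hv₂ : fixedRightProb L₂ (m n) (fun _ => (L₂ : ℝ)⁻¹) = ((L₂ : ℝ) - m n) / L₂ := by
    rw [uniform_value hL₂pos, Nat.cast_sub (by omega)]
  rw [hv₁] at hup
  rw [hv₂] at hlo
  -- final arithmetic
  rw [Real.dist_eq]
  have hupper : fixedRightProb (L n) (m n) (p n) / ε n ≤ 1 + 5 * δ := by
    have key : (L₁ : ℝ) - m n ≤ (1 + 5 * δ) * (ε n * L₁) :=
      key_upper δ (ε n) (L n) L₁ (m n) hδpos hδ8 hε h2 hLr hδεL hL₁ge hL₁le hmlb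
    calc fixedRightProb (L n) (m n) (p n) / ε n
        ≤ (((L₁ : ℝ) - m n) / L₁) / ε n := by
          exact (div_le_div_iff_of_pos_right hε).mpr hup
      _ ≤ 1 + 5 * δ := by
          rw [div_div, div_le_iff₀ (mul_pos hL₁posR hε)]
          calc (L₁ : ℝ) - m n ≤ (1 + 5 * δ) * (ε n * L₁) := key
            _ = (1 + 5 * δ) * (L₁ * ε n) := by ring
  have hlower : 1 - 5 * δ ≤ fixedRightProb (L n) (m n) (p n) / ε n := by
    have key : (1 - 5 * δ) * (ε n * L₂) ≤ (L₂ : ℝ) - m n :=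
      key_lower δ (ε n) (L n) L₂ (m n) hδpos hδ8 hε h2 hLr hδεL hL₂le hL₂lb hmub
    calc (1 : ℝ) - 5 * δ
        ≤ (((L₂ : ℝ) - m n) / L₂) / ε n := by
          rw [div_div, le_div_iff₀ (mul_pos hL₂posR hε)]
          calc (1 - 5 * δ) * (L₂ * ε n) = (1 - 5 * δ) * (ε n * L₂) := by ring
            _ ≤ (L₂ : ℝ) - m n := key
      _ ≤ fixedRightProb (L n) (m n) (p n) / ε n := by
          exact (div_le_div_iff_of_pos_right hε).mpr hlo
  rw [abs_lt]
  constructor <;> linarith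

end Main
end

section
/- Place M balls independently and uniformly at random into bins 1,…,M, let Z_i be the number of balls in bin i, and define the walk Y_0 = 0, Y_i = Y_{i-1} + Z_i - 1 for 1 ≤ i ≤ M (so Y_M = 0). Let MIN = min_{0 ≤ i ≤ M} Y_i. If M = M(n) → ∞ and s = s(n) → ∞, then Pr[MIN < -s√M] → 0. -/
open Filter Topology Real Finset

/-- Place `M` balls independently and uniformly at random into bins `1,…,M`
(placement `ω : Fin M → Fin M`, each with probability `M⁻¹ ^ M`).  With `Z_i` the
number of balls in bin `i` and the walk `Y_0 = 0`, `Y_i = Y_{i-1} + Z_i - 1` (so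
`Y_t = #{j : ball j in first t bins} - t`), this is the probability that
`MIN = min_{0 ≤ i ≤ M} Y_i` is `< -x`. -/
noncomputable def minBelowProb (M : ℕ) (x : ℝ) : ℝ :=
  ∑ ω : Fin M → Fin M, ((M : ℝ))⁻¹ ^ M *
    ind (∃ t ≤ M,
      ((Finset.univ.filter (fun j => ((ω j : ℕ) < t))).card : ℝ) - t < -x)


namespace BallsWalkAux
open Classical

/-- number of balls in bins `< t` -/
def cnt (M t : ℕ) (ω : Fin M → Fin M) : ℕ :=
  (Finset.univ.filter (fun j => ((ω j : ℕ) < t))).card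

noncomputable def chi (M T : ℕ) (k : Fin M) : ℝ := if (k : ℕ) < T then 1 else 0

lemma chi_nonneg (M T : ℕ) (k : Fin M) : 0 ≤ chi M T k := by
  unfold chi; split <;> norm_num

lemma chi_le_one (M T : ℕ) (k : Fin M) : chi M T k ≤ 1 := by
  unfold chi; split <;> norm_num

lemma cnt_cast (M T : ℕ) (ω : Fin M → Fin M) :
    ((cnt M T ω : ℝ)) = ∑ j, chi M T (ω j) := by
  unfold cnt chi
  rw [Finset.card_filter]
  push_cast
  simp [apply_ite (Nat.cast : ℕ → ℝ)]

lemma card_filter_lt {M T : ℕ} (hT : T ≤ M) :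
    (Finset.univ.filter (fun k : Fin M => (k : ℕ) < T)).card = T := by
  have : (Finset.univ.filter (fun k : Fin M => (k : ℕ) < T)) =
      Finset.map (Fin.castLEEmb hT) Finset.univ := by
    ext k
    simp only [mem_filter, mem_univ, true_and, Finset.mem_map, Finset.mem_univ]
    constructor
    · intro h; exact ⟨⟨k, h⟩, by simp [Fin.castLEEmb, Fin.ext_iff]⟩
    · rintro ⟨b, rfl⟩; simp
  rw [this, Finset.card_map, Finset.card_univ, Fintype.card_fin]

lemma card_filter_ge {M t : ℕ} (ht : t ≤ M) :
    (Finset.univ.filter (fun k : Fin M => t ≤ (k : ℕ))).card = M - t := by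
  have h := Finset.card_filter_add_card_filter_not (s := (Finset.univ : Finset (Fin M)))
    (p := fun k : Fin M => (k : ℕ) < t)
  rw [card_filter_lt ht, Finset.card_univ, Fintype.card_fin] at h
  have : (Finset.univ.filter (fun k : Fin M => t ≤ (k : ℕ)))
      = (Finset.univ.filter (fun k : Fin M => ¬ (k : ℕ) < t)) := by
    apply Finset.filter_congr; intro k _; simp [not_lt]
  rw [this]; omega

noncomputable def pj {M : ℕ} (E : Fin M → Finset (Fin M)) (χ : Fin M → ℝ) (j : Fin M) : ℝ :=
  (∑ k ∈ E j, χ k) / (E j).card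

lemma sum_sub_pj {M : ℕ} (E : Fin M → Finset (Fin M)) (χ : Fin M → ℝ) (j : Fin M) :
    ∑ k ∈ E j, (χ k - pj E χ j) = 0 := by
  rcases (E j).eq_empty_or_nonempty with h | h
  · simp [h]
  · have hc : ((E j).card : ℝ) ≠ 0 := by
      simp [Finset.card_ne_zero_of_mem h.choose_spec]
    rw [Finset.sum_sub_distrib, Finset.sum_const, nsmul_eq_mul, pj]
    field_simp
    ring

lemma pj_mem {M : ℕ} (E : Fin M → Finset (Fin M)) (χ : Fin M → ℝ)
    (h0 : ∀ k, 0 ≤ χ k) (h1 : ∀ k, χ k ≤ 1) (j : Fin M) :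
    0 ≤ pj E χ j ∧ pj E χ j ≤ 1 := by
  rcases (E j).eq_empty_or_nonempty with h | h
  · simp [pj, h]
  · have hc : (0:ℝ) < (E j).card := by
      exact_mod_cast Finset.card_pos.mpr h
    constructor
    · apply div_nonneg _ hc.le
      exact Finset.sum_nonneg fun k _ => h0 k
    · rw [pj, div_le_one hc]
      calc ∑ k ∈ E j, χ k ≤ ∑ k ∈ E j, 1 := Finset.sum_le_sum fun k _ => h1 k
        _ = (E j).card := by simp

lemma offdiag {M : ℕ} (E : Fin M → Finset (Fin M)) (χ : Fin M → ℝ) {j j' : Fin M}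
    (hjj : j ≠ j') :
    ∑ ω ∈ Fintype.piFinset E, (χ (ω j) - pj E χ j) * (χ (ω j') - pj E χ j') = 0 := by
  set f : Fin M → Fin M → ℝ := fun i k =>
    if i = j then χ k - pj E χ j else if i = j' then χ k - pj E χ j' else 1 with hf
  have key : ∀ ω : Fin M → Fin M,
      (χ (ω j) - pj E χ j) * (χ (ω j') - pj E χ j') = ∏ i, f i (ω i) := by
    intro ω
    rw [← Finset.mul_prod_erase Finset.univ (fun i => f i (ω i)) (Finset.mem_univ j)]
    rw [← Finset.mul_prod_erase _ (fun i => f i (ω i))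
      (Finset.mem_erase.mpr ⟨Ne.symm hjj, Finset.mem_univ j'⟩)]
    have h1 : f j (ω j) = χ (ω j) - pj E χ j := by simp [hf]
    have h2 : f j' (ω j') = χ (ω j') - pj E χ j' := by simp [hf, Ne.symm hjj]
    have h3 : ∏ i ∈ (Finset.univ.erase j).erase j', f i (ω i) = 1 := by
      apply Finset.prod_eq_one
      intro i hi
      have hi1 := Finset.ne_of_mem_erase hi
      have hi2 := Finset.ne_of_mem_erase (Finset.mem_of_mem_erase hi)
      simp [hf, hi1, hi2]
    rw [h1, h2, h3]; ring
  calc ∑ ω ∈ Fintype.piFinset E, (χ (ω j) - pj E χ j) * (χ (ω j') - pj E χ j')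
      = ∑ ω ∈ Fintype.piFinset E, ∏ i, f i (ω i) := by
        exact Finset.sum_congr rfl fun ω _ => key ω
    _ = ∏ i, ∑ k ∈ E i, f i k := (Finset.prod_univ_sum E f).symm
    _ = 0 := by
        apply Finset.prod_eq_zero (Finset.mem_univ j)
        simpa [hf] using sum_sub_pj E χ j

lemma sum_sq_le {M : ℕ} (E : Fin M → Finset (Fin M)) (χ : Fin M → ℝ)
    (h0 : ∀ k, 0 ≤ χ k) (h1 : ∀ k, χ k ≤ 1) :
    ∑ ω ∈ Fintype.piFinset E, (∑ j, χ (ω j) - ∑ j, pj E χ j)^2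
      ≤ ((Fintype.piFinset E).card : ℝ) * M := by
  have expand : ∀ ω : Fin M → Fin M,
      (∑ j, χ (ω j) - ∑ j, pj E χ j)^2
        = ∑ j, ∑ j', (χ (ω j) - pj E χ j) * (χ (ω j') - pj E χ j') := by
    intro ω
    rw [← Finset.sum_sub_distrib, sq, Finset.sum_mul_sum]
  have diag : ∀ j : Fin M, ∑ ω ∈ Fintype.piFinset E, (χ (ω j) - pj E χ j)^2
      ≤ ((Fintype.piFinset E).card : ℝ) := by
    intro j
    calc ∑ ω ∈ Fintype.piFinset E, (χ (ω j) - pj E χ j)^2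
        ≤ ∑ ω ∈ Fintype.piFinset E, 1 := by
          apply Finset.sum_le_sum
          intro ω _
          have h0' := h0 (ω j); have h1' := h1 (ω j)
          have hp := pj_mem E χ h0 h1 j
          nlinarith [hp.1, hp.2]
      _ = ((Fintype.piFinset E).card : ℝ) := by simp
  calc ∑ ω ∈ Fintype.piFinset E, (∑ j, χ (ω j) - ∑ j, pj E χ j)^2
      = ∑ ω ∈ Fintype.piFinset E, ∑ j, ∑ j',
          (χ (ω j) - pj E χ j) * (χ (ω j') - pj E χ j') :=
        Finset.sum_congr rfl fun ω _ => expand ω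
    _ = ∑ j, ∑ ω ∈ Fintype.piFinset E, ∑ j',
          (χ (ω j) - pj E χ j) * (χ (ω j') - pj E χ j') := Finset.sum_comm
    _ = ∑ j, ∑ j', ∑ ω ∈ Fintype.piFinset E,
          (χ (ω j) - pj E χ j) * (χ (ω j') - pj E χ j') :=
        Finset.sum_congr rfl fun j _ => Finset.sum_comm
    _ = ∑ j, ∑ ω ∈ Fintype.piFinset E, (χ (ω j) - pj E χ j)^2 := by
        apply Finset.sum_congr rfl; intro j _
        rw [Finset.sum_eq_single j]
        · apply Finset.sum_congr rfl; intro ω _; ring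
        · intro j' _ hj'; exact offdiag E χ (Ne.symm hj')
        · intro h; exact absurd (Finset.mem_univ j) h
    _ ≤ ∑ j : Fin M, ((Fintype.piFinset E).card : ℝ) :=
        Finset.sum_le_sum fun j _ => diag j
    _ = ((Fintype.piFinset E).card : ℝ) * M := by
        simp [mul_comm]

lemma count_dev_le {M : ℕ} (E : Fin M → Finset (Fin M)) (χ : Fin M → ℝ)
    (h0 : ∀ k, 0 ≤ χ k) (h1 : ∀ k, χ k ≤ 1) {a : ℝ} (ha : 0 < a) :
    (((Fintype.piFinset E).filter
        (fun ω => a ≤ |∑ j, χ (ω j) - ∑ j, pj E χ j|)).card : ℝ) * a^2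
      ≤ ((Fintype.piFinset E).card : ℝ) * M := by
  set W : (Fin M → Fin M) → ℝ := fun ω => ∑ j, χ (ω j) - ∑ j, pj E χ j with hW
  calc (((Fintype.piFinset E).filter (fun ω => a ≤ |W ω|)).card : ℝ) * a^2
      = ∑ ω ∈ (Fintype.piFinset E).filter (fun ω => a ≤ |W ω|), a^2 := by
        rw [Finset.sum_const, nsmul_eq_mul]
    _ ≤ ∑ ω ∈ (Fintype.piFinset E).filter (fun ω => a ≤ |W ω|), (W ω)^2 := by
        apply Finset.sum_le_sum
        intro ω hω
        have := (Finset.mem_filter.mp hω).2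
        calc a^2 ≤ |W ω|^2 := by nlinarith [abs_nonneg (W ω)]
          _ = (W ω)^2 := sq_abs _
    _ ≤ ∑ ω ∈ Fintype.piFinset E, (W ω)^2 := by
        apply Finset.sum_le_sum_of_subset_of_nonneg (Finset.filter_subset _ _)
        intro ω _ _; positivity
    _ ≤ ((Fintype.piFinset E).card : ℝ) * M := sum_sq_le E χ h0 h1

/-- the "bad at time `t`" predicate -/
def bad (M : ℕ) (x : ℝ) (t : ℕ) (ω : Fin M → Fin M) : Prop :=
  x < |(cnt M t ω : ℝ) - t|

/-- "bad at some time `≤ U`" -/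
def Pd (M U : ℕ) (x : ℝ) (ω : Fin M → Fin M) : Prop :=
  ∃ t, t ≤ U ∧ bad M x t ω

open Classical in
noncomputable def tau (M U : ℕ) (x : ℝ) (ω : Fin M → Fin M) : ℕ :=
  if h : Pd M U x ω then Nat.find h else 0

open Classical in
noncomputable def sig (M U : ℕ) (x : ℝ) (ω : Fin M → Fin M) (j : Fin M) :
    Option (Fin M) :=
  if (ω j : ℕ) < tau M U x ω then some (ω j) else none

noncomputable def atomE (M t : ℕ) (s : Fin M → Option (Fin M)) (j : Fin M) :
    Finset (Fin M) :=
  match s j with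
  | some k => {k}
  | none => Finset.univ.filter fun k => t ≤ (k : ℕ)

section TauFacts
variable {M U : ℕ} {x : ℝ} {ω ω₀ : Fin M → Fin M}

lemma tau_le (h : Pd M U x ω) : tau M U x ω ≤ U := by
  rw [tau, dif_pos h]; exact (Nat.find_spec h).1

lemma tau_bad (h : Pd M U x ω) : bad M x (tau M U x ω) ω := by
  rw [tau, dif_pos h]; exact (Nat.find_spec h).2

lemma tau_min (h : Pd M U x ω) {u : ℕ} (hu : u < tau M U x ω) : ¬ bad M x u ω := by
  rw [tau, dif_pos h] at hu
  intro hb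
  exact Nat.find_min h hu ⟨le_trans (le_of_lt hu) (Nat.find_spec h).1, hb⟩

lemma sig_some_iff {j : Fin M} {k : Fin M} :
    sig M U x ω j = some k ↔ ((ω j : ℕ) < tau M U x ω ∧ ω j = k) := by
  rw [sig]; split
  · simp_all
  · simp_all

lemma sig_none_iff {j : Fin M} :
    sig M U x ω j = none ↔ ¬ ((ω j : ℕ) < tau M U x ω) := by
  rw [sig]; split <;> simp_all

lemma mem_atom_self (h : Pd M U x ω) :
    ω ∈ Fintype.piFinset (atomE M (tau M U x ω) (sig M U x ω)) := by
  rw [Fintype.mem_piFinset]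
  intro j
  rw [atomE]
  by_cases hj : (ω j : ℕ) < tau M U x ω
  · rw [sig, if_pos hj]; simp
  · rw [sig, if_neg hj]; simp [Nat.not_lt.mp hj]

end TauFacts

section Fiber
variable {M U : ℕ} {x : ℝ} {ω ω₀ : Fin M → Fin M}

/-- Within the atom of `ω₀`, the walk agrees with that of `ω₀` up to time `tau ω₀`. -/
lemma cnt_agree (h₀ : Pd M U x ω₀)
    (hω : ω ∈ Fintype.piFinset (atomE M (tau M U x ω₀) (sig M U x ω₀)))
    {u : ℕ} (hu : u ≤ tau M U x ω₀) :
    cnt M u ω = cnt M u ω₀ := by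
  unfold cnt
  congr 1
  apply Finset.filter_congr
  intro j _
  rw [Fintype.mem_piFinset] at hω
  have hj := hω j
  by_cases hlt : (ω₀ j : ℕ) < tau M U x ω₀
  · have hs : sig M U x ω₀ j = some (ω₀ j) := by rw [sig, if_pos hlt]
    rw [atomE, hs] at hj
    simp only [Finset.mem_singleton] at hj
    rw [hj]
  · have hs : sig M U x ω₀ j = none := sig_none_iff.mpr hlt
    rw [atomE, hs] at hj
    simp only [Finset.mem_filter, Finset.mem_univ, true_and] at hj
    constructor
    · intro hc; omega
    · intro hc; omega

/-- Membership in the atom of `ω₀` implies same first-passage data. -/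
lemma atom_mem_props (h₀ : Pd M U x ω₀)
    (hω : ω ∈ Fintype.piFinset (atomE M (tau M U x ω₀) (sig M U x ω₀))) :
    Pd M U x ω ∧ tau M U x ω = tau M U x ω₀ ∧ sig M U x ω = sig M U x ω₀ := by
  set t := tau M U x ω₀ with ht
  have hbad : bad M x t ω := by
    rw [bad, cnt_agree h₀ hω (le_refl t)]; exact tau_bad h₀
  have hPd : Pd M U x ω := ⟨t, tau_le h₀, hbad⟩
  have htau : tau M U x ω = t := by
    by_contra hne
    rcases Nat.lt_or_ge (tau M U x ω) t with hlt | hge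
    · have hb := tau_bad hPd
      rw [bad, cnt_agree h₀ hω (le_of_lt hlt)] at hb
      exact tau_min h₀ hlt hb
    · have hlt' : t < tau M U x ω := lt_of_le_of_ne hge (fun hc => hne hc.symm)
      exact tau_min hPd hlt' hbad
  refine ⟨hPd, htau, ?_⟩
  funext j
  rw [Fintype.mem_piFinset] at hω
  have hj := hω j
  by_cases hlt : (ω₀ j : ℕ) < t
  · have hs : sig M U x ω₀ j = some (ω₀ j) := by rw [sig, ← ht, if_pos hlt]
    rw [atomE, hs] at hj
    simp only [Finset.mem_singleton] at hj
    rw [hs, sig, htau, hj, if_pos hlt]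
  · have hs : sig M U x ω₀ j = none := by
      rw [sig, ← ht, if_neg hlt]
    rw [atomE, hs] at hj
    simp only [Finset.mem_filter, Finset.mem_univ, true_and] at hj
    rw [hs, sig, htau, if_neg (by omega)]

/-- equal signatures give equal first-passage times -/
lemma tau_le_of_sig (h : Pd M U x ω) (h₀ : Pd M U x ω₀)
    (hs : sig M U x ω = sig M U x ω₀) : tau M U x ω₀ ≤ tau M U x ω := by
  by_contra hlt
  push_neg at hlt
  set t' := tau M U x ω with ht'
  have hagree : cnt M t' ω = cnt M t' ω₀ := by
    unfold cnt
    congr 1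
    apply Finset.filter_congr
    intro j _
    by_cases hl : (ω j : ℕ) < t'
    · have : sig M U x ω j = some (ω j) := by rw [sig, ← ht', if_pos hl]
      have h2 : sig M U x ω₀ j = some (ω j) := by rw [← hs]; exact this
      rcases sig_some_iff.mp h2 with ⟨_, hval⟩
      rw [← hval]
    · have : sig M U x ω j = none := sig_none_iff.mpr hl
      have h2 : sig M U x ω₀ j = none := by rw [← hs]; exact this
      have h3 := sig_none_iff.mp h2
      constructor
      · intro hc; omega
      · intro hc; exfalso; apply h3; omega
  have hb : bad M x t' ω₀ := by
    rw [bad, ← hagree]; exact tau_bad h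
  exact tau_min h₀ hlt hb

lemma tau_eq_of_sig (h : Pd M U x ω) (h₀ : Pd M U x ω₀)
    (hs : sig M U x ω = sig M U x ω₀) : tau M U x ω = tau M U x ω₀ :=
  le_antisymm (tau_le_of_sig h₀ h hs.symm) (tau_le_of_sig h h₀ hs)

/-- the fiber of the signature map over `sig ω₀` is exactly the atom of `ω₀`. -/
lemma fiber_eq (h₀ : Pd M U x ω₀) :
    ((Finset.univ.filter (Pd M U x)).filter
        (fun ω => sig M U x ω = sig M U x ω₀))
      = Fintype.piFinset (atomE M (tau M U x ω₀) (sig M U x ω₀)) := by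
  ext ω
  simp only [Finset.mem_filter, Finset.mem_univ, true_and]
  constructor
  · rintro ⟨hP, hs⟩
    have htau := tau_eq_of_sig hP h₀ hs
    have := mem_atom_self hP
    rw [htau, hs] at this
    exact this
  · intro hω
    have := atom_mem_props h₀ hω
    exact ⟨this.1, this.2.2⟩

end Fiber

lemma card_band {M t T : ℕ} (htT : t ≤ T) (hT : T ≤ M) :
    (Finset.univ.filter (fun k : Fin M => t ≤ (k : ℕ) ∧ (k : ℕ) < T)).card = T - t := by
  have hsplit : (Finset.univ.filter (fun k : Fin M => (k : ℕ) < T))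
      = (Finset.univ.filter (fun k : Fin M => (k : ℕ) < t))
        ∪ (Finset.univ.filter (fun k : Fin M => t ≤ (k : ℕ) ∧ (k : ℕ) < T)) := by
    ext k
    simp only [Finset.mem_filter, Finset.mem_univ, true_and, Finset.mem_union]
    omega
  have hdisj : Disjoint (Finset.univ.filter (fun k : Fin M => (k : ℕ) < t))
      (Finset.univ.filter (fun k : Fin M => t ≤ (k : ℕ) ∧ (k : ℕ) < T)) := by
    rw [Finset.disjoint_left]
    intro k hk hk'
    simp only [Finset.mem_filter, Finset.mem_univ, true_and] at hk hk'
    omega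
  have := Finset.card_union_of_disjoint hdisj
  rw [← hsplit, card_filter_lt hT, card_filter_lt (le_trans htT hT)] at this
  omega

lemma sum_chi_band {M t T : ℕ} (htT : t ≤ T) (hT : T ≤ M) :
    ∑ k ∈ Finset.univ.filter (fun k : Fin M => t ≤ (k : ℕ)), chi M T k
      = ((T : ℝ) - t) := by
  unfold chi
  rw [Finset.sum_boole, Finset.filter_filter]
  have : (Finset.univ.filter (fun k : Fin M => t ≤ (k : ℕ) ∧ (k : ℕ) < T)).card = T - t :=
    card_band htT hT
  rw [this]
  push_cast [Nat.cast_sub htT]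
  ring


section Mu
variable {M t T : ℕ} {s : Fin M → Option (Fin M)}

lemma pj_some {j k : Fin M} (hs : s j = some k) (hk : (k : ℕ) < T) :
    pj (atomE M t s) (chi M T) j = 1 := by
  rw [pj]
  have : atomE M t s j = {k} := by rw [atomE, hs]
  rw [this, Finset.sum_singleton, Finset.card_singleton, chi, if_pos hk]
  norm_num

lemma pj_none {j : Fin M} (hs : s j = none) (htT : t ≤ T) (hT : T ≤ M) :
    pj (atomE M t s) (chi M T) j = ((T : ℝ) - t) / ((M : ℝ) - t) := by
  rw [pj]
  have : atomE M t s j = Finset.univ.filter fun k : Fin M => t ≤ (k : ℕ) := by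
    rw [atomE, hs]
  rw [this, sum_chi_band htT hT, card_filter_ge (le_trans htT hT),
    Nat.cast_sub (le_trans htT hT)]

lemma mu_eq {c : ℕ} (htT : t ≤ T) (hT : T ≤ M)
    (hc : (Finset.univ.filter (fun j : Fin M => (s j).isSome)).card = c)
    (hsk : ∀ j k, s j = some k → (k : ℕ) < T) :
    ∑ j, pj (atomE M t s) (chi M T) j
      = c + ((M : ℝ) - c) * (((T : ℝ) - t) / ((M : ℝ) - t)) := by
  rw [← Finset.sum_filter_add_sum_filter_not Finset.univ (fun j => (s j).isSome)]
  have hcM : c ≤ M := by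
    rw [← hc]
    calc (Finset.univ.filter (fun j : Fin M => (s j).isSome)).card
        ≤ (Finset.univ : Finset (Fin M)).card := Finset.card_filter_le _ _
      _ = M := by simp
  have e1 : ∀ j ∈ Finset.univ.filter (fun j : Fin M => (s j).isSome),
      pj (atomE M t s) (chi M T) j = 1 := by
    intro j hj
    simp only [Finset.mem_filter, Finset.mem_univ, true_and] at hj
    rcases Option.isSome_iff_exists.mp hj with ⟨k, hk⟩
    exact pj_some hk (hsk j k hk)
  have e2 : ∀ j ∈ Finset.univ.filter (fun j : Fin M => ¬ (s j).isSome),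
      pj (atomE M t s) (chi M T) j = ((T : ℝ) - t) / ((M : ℝ) - t) := by
    intro j hj
    simp only [Finset.mem_filter, Finset.mem_univ, true_and] at hj
    exact pj_none (Option.not_isSome_iff_eq_none.mp hj) htT hT
  have hcard2 : (Finset.univ.filter (fun j : Fin M => ¬ (s j).isSome)).card = M - c := by
    have := Finset.card_filter_add_card_filter_not
      (s := (Finset.univ : Finset (Fin M))) (p := fun j : Fin M => (s j).isSome)
    rw [hc, Finset.card_univ, Fintype.card_fin] at this
    omega
  rw [Finset.sum_congr rfl e1, Finset.sum_congr rfl e2, Finset.sum_const, Finset.sum_const,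
    hc, hcard2, nsmul_eq_mul, nsmul_eq_mul, Nat.cast_sub hcM]
  push_cast
  ring

end Mu

section Atom
variable {M U T : ℕ} {x : ℝ} {ω₀ : Fin M → Fin M}

/-- per-atom conditional Chebyshev: at least half of the atom lands in `G`. -/
lemma atom_half (hM : 0 < M) (hUT : U ≤ T) (hTM3 : M ≤ 3 * (M - T)) (hx : 0 < x)
    (hx2 : 288 * (M : ℝ) ≤ x ^ 2) (h₀ : Pd M U x ω₀) :
    (Fintype.piFinset (atomE M (tau M U x ω₀) (sig M U x ω₀))).card
      ≤ 2 * ((Fintype.piFinset (atomE M (tau M U x ω₀) (sig M U x ω₀))).filter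
          (fun ω => x / 4 < |(cnt M T ω : ℝ) - (T : ℝ)|)).card := by
  set t := tau M U x ω₀ with hts
  set s := sig M U x ω₀ with hss
  set E := atomE M t s with hE
  set c := cnt M t ω₀ with hcs
  have htU : t ≤ U := tau_le h₀
  have hTM : T < M := by omega
  have htT : t ≤ T := le_trans htU hUT
  have htM : t < M := lt_of_le_of_lt htT hTM
  -- values recorded in the signature are `< t`
  have hsk : ∀ j k, s j = some k → (k : ℕ) < t := by
    intro j k hk
    rcases sig_some_iff.mp hk with ⟨h1, h2⟩
    rw [← h2]; exact h1
  -- number of `some`s is `c`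
  have hc : (Finset.univ.filter (fun j : Fin M => (s j).isSome)).card = c := by
    rw [hcs, cnt]
    congr 1
    apply Finset.filter_congr
    intro j _
    rw [hss, sig]
    by_cases hj : (ω₀ j : ℕ) < t
    · simp [hts, hj]
    · simp [hts, hj]
  have hcM : c ≤ M := by
    rw [hcs, cnt]
    calc (Finset.univ.filter fun j => ((ω₀ j : ℕ) < t)).card
        ≤ (Finset.univ : Finset (Fin M)).card := Finset.card_filter_le _ _
      _ = M := by simp
  -- the mean
  have hmu : ∑ j, pj E (chi M T) j
      = c + ((M : ℝ) - c) * (((T : ℝ) - t) / ((M : ℝ) - t)) :=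
    mu_eq htT (le_of_lt hTM) hc (fun j k hk => lt_of_lt_of_le (hsk j k hk) htT)
  set μ : ℝ := ∑ j, pj E (chi M T) j with hμ
  have hMt : (0:ℝ) < (M : ℝ) - t := by
    have : (t:ℝ) < M := by exact_mod_cast htM
    linarith
  have hmuT : μ - (T : ℝ) = ((c : ℝ) - t) * (((M : ℝ) - T) / ((M : ℝ) - t)) := by
    rw [hmu]
    field_simp
    ring
  -- the mean is far from `T`
  have hfar : x / 3 < |μ - (T : ℝ)| := by
    have hb : x < |(c : ℝ) - t| := tau_bad h₀
    have hrat : (1:ℝ)/3 ≤ ((M : ℝ) - T) / ((M : ℝ) - t) := by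
      rw [div_le_div_iff₀ (by norm_num) hMt]
      have h4 : M + 3 * T ≤ 3 * M := by omega
      have h4' : (M : ℝ) + 3 * T ≤ 3 * M := by exact_mod_cast h4
      have ht0 : (0:ℝ) ≤ t := by positivity
      linarith
    rw [hmuT, abs_mul]
    have h2 : |((M : ℝ) - T) / ((M : ℝ) - t)| = ((M : ℝ) - T) / ((M : ℝ) - t) := by
      apply abs_of_nonneg
      apply div_nonneg _ hMt.le
      have : (T:ℝ) < M := by exact_mod_cast hTM
      linarith
    rw [h2]
    have hr0 : (0:ℝ) < ((M : ℝ) - T) / ((M : ℝ) - t) := lt_of_lt_of_le (by norm_num) hrat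
    calc x / 3 = x * (1/3) := by ring
      _ ≤ x * (((M : ℝ) - T) / ((M : ℝ) - t)) := mul_le_mul_of_nonneg_left hrat hx.le
      _ < |(c : ℝ) - t| * (((M : ℝ) - T) / ((M : ℝ) - t)) :=
          mul_lt_mul_of_pos_right hb hr0
  -- Chebyshev on the atom
  have hx12 : (0:ℝ) < x / 12 := by linarith
  have hsub : (Fintype.piFinset E).filter
        (fun ω => ¬ (x / 4 < |(cnt M T ω : ℝ) - (T : ℝ)|))
      ⊆ (Fintype.piFinset E).filter
        (fun ω => x / 12 ≤ |∑ j, chi M T (ω j) - ∑ j, pj E (chi M T) j|) := by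
    intro ω hω
    rw [Finset.mem_filter] at hω ⊢
    refine ⟨hω.1, ?_⟩
    have hcond : |(cnt M T ω : ℝ) - (T : ℝ)| ≤ x / 4 := not_lt.mp hω.2
    rw [← cnt_cast]
    have htri : |μ - (T:ℝ)| ≤ |μ - (cnt M T ω : ℝ)| + |(cnt M T ω : ℝ) - (T:ℝ)| :=
      abs_sub_le _ _ _
    have : x / 12 ≤ |μ - (cnt M T ω : ℝ)| := by linarith
    rwa [abs_sub_comm] at this
  have hcheb := count_dev_le E (chi M T) (chi_nonneg M T) (chi_le_one M T) hx12
  have hA : ((((Fintype.piFinset E).filter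
        (fun ω => ¬ (x / 4 < |(cnt M T ω : ℝ) - (T : ℝ)|))).card : ℝ)) * (x/12)^2
      ≤ ((Fintype.piFinset E).card : ℝ) * M := by
    refine le_trans ?_ hcheb
    apply mul_le_mul_of_nonneg_right _ (by positivity)
    exact_mod_cast Finset.card_le_card hsub
  have hhalf : 2 * ((Fintype.piFinset E).filter
        (fun ω => ¬ (x / 4 < |(cnt M T ω : ℝ) - (T : ℝ)|))).card
      ≤ (Fintype.piFinset E).card := by
    have hM' : (0:ℝ) < M := by exact_mod_cast hM
    set A : ℝ := (((Fintype.piFinset E).filter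
        (fun ω => ¬ (x / 4 < |(cnt M T ω : ℝ) - (T : ℝ)|))).card : ℝ) with hAs
    set B : ℝ := ((Fintype.piFinset E).card : ℝ) with hBs
    have hA0 : 0 ≤ A := by positivity
    have key : 2 * A ≤ B := by nlinarith
    refine (Nat.cast_le (α := ℝ)).mp ?_
    simp only [Nat.cast_mul, Nat.cast_ofNat]
    exact key
  have hsplit := Finset.card_filter_add_card_filter_not
    (s := Fintype.piFinset E) (p := fun ω => x / 4 < |(cnt M T ω : ℝ) - (T : ℝ)|)
  omega

end Atom

section Maximal
variable {M U T : ℕ} {x : ℝ}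

/-- The maximal inequality: the probability that the walk deviates by more than `x`
at some time `≤ U` is at most twice the probability of deviation `> x/4` at time `T`. -/
lemma maximal (hM : 0 < M) (hUT : U ≤ T) (hTM3 : M ≤ 3 * (M - T)) (hx : 0 < x)
    (hx2 : 288 * (M : ℝ) ≤ x ^ 2) :
    (Finset.univ.filter (Pd M U x)).card
      ≤ 2 * (Finset.univ.filter
          (fun ω : Fin M → Fin M => x / 4 < |(cnt M T ω : ℝ) - (T : ℝ)|)).card := by
  classical
  set D := Finset.univ.filter (Pd M U x) with hD
  set Gp : (Fin M → Fin M) → Prop := fun ω => x / 4 < |(cnt M T ω : ℝ) - (T : ℝ)| with hGp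
  have hfib1 : D.card = ∑ s ∈ D.image (sig M U x),
      (D.filter (fun ω => sig M U x ω = s)).card :=
    Finset.card_eq_sum_card_fiberwise (fun ω hω => Finset.mem_image_of_mem _ hω)
  have hfib2 : (D.filter Gp).card = ∑ s ∈ D.image (sig M U x),
      ((D.filter Gp).filter (fun ω => sig M U x ω = s)).card :=
    Finset.card_eq_sum_card_fiberwise
      (fun ω hω => Finset.mem_image_of_mem _ (Finset.mem_of_mem_filter ω hω))
  have hperfiber : ∀ s ∈ D.image (sig M U x),
      (D.filter (fun ω => sig M U x ω = s)).card
        ≤ 2 * ((D.filter Gp).filter (fun ω => sig M U x ω = s)).card := by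
    intro s hs
    rcases Finset.mem_image.mp hs with ⟨ω₀, hω₀D, hsig⟩
    have h₀ : Pd M U x ω₀ := (Finset.mem_filter.mp hω₀D).2
    rw [← hsig]
    have h1 : D.filter (fun ω => sig M U x ω = sig M U x ω₀)
        = Fintype.piFinset (atomE M (tau M U x ω₀) (sig M U x ω₀)) := fiber_eq h₀
    have h2 : (D.filter Gp).filter (fun ω => sig M U x ω = sig M U x ω₀)
        = (Fintype.piFinset (atomE M (tau M U x ω₀) (sig M U x ω₀))).filter Gp := by
      rw [Finset.filter_comm, h1]
    rw [h1, h2]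
    exact atom_half hM hUT hTM3 hx hx2 h₀
  calc D.card = ∑ s ∈ D.image (sig M U x),
        (D.filter (fun ω => sig M U x ω = s)).card := hfib1
    _ ≤ ∑ s ∈ D.image (sig M U x),
        2 * ((D.filter Gp).filter (fun ω => sig M U x ω = s)).card :=
      Finset.sum_le_sum hperfiber
    _ = 2 * (D.filter Gp).card := by rw [← Finset.mul_sum, ← hfib2]
    _ ≤ 2 * (Finset.univ.filter Gp).card := by
        have : D.filter Gp ⊆ Finset.univ.filter Gp := by
          apply Finset.monotone_filter_left
          exact Finset.filter_subset _ _
        exact Nat.mul_le_mul_left 2 (Finset.card_le_card this)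
end Maximal

/-- unconditional Chebyshev at time `T` -/
lemma global_cheb {M T : ℕ} (hM : 0 < M) (hT : T ≤ M) {a : ℝ} (ha : 0 < a) :
    ((Finset.univ.filter
        (fun ω : Fin M → Fin M => a ≤ |(cnt M T ω : ℝ) - (T : ℝ)|)).card : ℝ) * a^2
      ≤ ((M : ℝ))^M * M := by
  have hE := count_dev_le (fun _ : Fin M => (Finset.univ : Finset (Fin M)))
    (chi M T) (chi_nonneg M T) (chi_le_one M T) ha
  rw [Fintype.piFinset_univ] at hE
  have hpj : ∀ j : Fin M, pj (fun _ : Fin M => (Finset.univ : Finset (Fin M))) (chi M T) j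
      = (T : ℝ) / (M : ℝ) := by
    intro j
    rw [pj]
    have h1 : ∑ k, chi M T k = (T : ℝ) := by
      unfold chi
      rw [Finset.sum_boole]
      exact_mod_cast congrArg (Nat.cast : ℕ → ℝ) (card_filter_lt hT)
    rw [h1]
    norm_num
  have hMne : ((M : ℝ)) ≠ 0 := by positivity
  have hsum : ∑ j : Fin M, pj (fun _ : Fin M => (Finset.univ : Finset (Fin M))) (chi M T) j
      = (T : ℝ) := by
    rw [Finset.sum_congr rfl (fun j _ => hpj j), Finset.sum_const, Finset.card_univ,
      Fintype.card_fin, nsmul_eq_mul]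
    field_simp
  have hfeq : (Finset.univ.filter (fun ω : Fin M → Fin M =>
        a ≤ |∑ j, chi M T (ω j) - ∑ j, pj (fun _ : Fin M => (Finset.univ : Finset (Fin M)))
          (chi M T) j|))
      = (Finset.univ.filter
        (fun ω : Fin M → Fin M => a ≤ |(cnt M T ω : ℝ) - (T : ℝ)|)) := by
    apply Finset.filter_congr
    intro ω _
    rw [hsum, ← cnt_cast]
  rw [hfeq] at hE
  simp only [Finset.card_univ, Fintype.card_fun, Fintype.card_fin] at hE
  calc ((Finset.univ.filter
        (fun ω : Fin M → Fin M => a ≤ |(cnt M T ω : ℝ) - (T : ℝ)|)).card : ℝ) * a^2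
      ≤ ((M ^ M : ℕ) : ℝ) * M := hE
    _ = ((M : ℝ))^M * M := by push_cast; ring

/-- reversal bijection: deep minima in the late window come from early upward deviations -/
lemma flip_bound {M T : ℕ} {x : ℝ} :
    (Finset.univ.filter (fun ω : Fin M → Fin M =>
        ∃ t, T < t ∧ t ≤ M ∧ (cnt M t ω : ℝ) - t < -x)).card
      ≤ (Finset.univ.filter (fun ω : Fin M → Fin M =>
        ∃ u, u ≤ M - T - 1 ∧ x < (cnt M u ω : ℝ) - u)).card := by
  classical
  apply Finset.card_le_card_of_injOn (fun ω => fun j => (ω j).rev)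
  · intro ω hω
    rw [Finset.mem_coe, Finset.mem_filter] at hω ⊢
    refine ⟨Finset.mem_univ _, ?_⟩
    rcases hω.2 with ⟨t, hTt, htM, hdev⟩
    refine ⟨M - t, by omega, ?_⟩
    have hkey : cnt M (M - t) (fun j => (ω j).rev) = M - cnt M t ω := by
      unfold cnt
      have h1 : Finset.univ.filter (fun j => (((ω j).rev : ℕ) < M - t))
          = Finset.univ.filter (fun j => ¬ ((ω j : ℕ) < t)) := by
        apply Finset.filter_congr
        intro j _
        have hrev : ((ω j).rev : ℕ) = M - 1 - (ω j : ℕ) := by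
          rw [Fin.val_rev]; omega
        have hlt : (ω j : ℕ) < M := (ω j).isLt
        rw [hrev]
        omega
      rw [h1]
      have := Finset.card_filter_add_card_filter_not
        (s := (Finset.univ : Finset (Fin M))) (p := fun j => ((ω j : ℕ) < t))
      rw [Finset.card_univ, Fintype.card_fin] at this
      omega
    rw [hkey]
    have hcle : cnt M t ω ≤ M := by
      unfold cnt
      calc _ ≤ (Finset.univ : Finset (Fin M)).card := Finset.card_filter_le _ _
        _ = M := by simp
    rw [Nat.cast_sub hcle, Nat.cast_sub htM]
    · push_cast
      linarith
  · intro ω₁ _ ω₂ _ heq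
    funext j
    have := congrFun heq j
    exact Fin.rev_injective this

lemma minBelow_count (M : ℕ) (x : ℝ) :
    minBelowProb M x = ((M : ℝ))⁻¹ ^ M *
      ((Finset.univ.filter (fun ω : Fin M → Fin M =>
        ∃ t ≤ M, (cnt M t ω : ℝ) - t < -x)).card : ℝ) := by
  unfold minBelowProb ind
  rw [← Finset.mul_sum]
  congr 1
  conv_rhs => rw [Finset.card_filter]
  push_cast
  unfold cnt
  refine Finset.sum_congr rfl fun ω _ => ?_
  congr 1

lemma master {M : ℕ} {x : ℝ} (hM : 2 ≤ M) (hx : 0 < x) (hx2 : 288 * (M : ℝ) ≤ x ^ 2) :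
    minBelowProb M x ≤ 64 * M / x ^ 2 := by
  classical
  set T : ℕ := (M + 1) / 2 with hT
  have hM0 : 0 < M := by omega
  have hTM : T ≤ M := by omega
  have hTM3 : M ≤ 3 * (M - T) := by omega
  have hU2 : M - T - 1 ≤ T := by omega
  set Dfull := Finset.univ.filter (fun ω : Fin M → Fin M =>
    ∃ t ≤ M, (cnt M t ω : ℝ) - t < -x) with hDfull
  set D1 := Finset.univ.filter (fun ω : Fin M → Fin M =>
    ∃ t ≤ T, (cnt M t ω : ℝ) - t < -x) with hD1
  set D2 := Finset.univ.filter (fun ω : Fin M → Fin M =>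
    ∃ t, T < t ∧ t ≤ M ∧ (cnt M t ω : ℝ) - t < -x) with hD2
  set G := Finset.univ.filter
    (fun ω : Fin M → Fin M => x / 4 < |(cnt M T ω : ℝ) - (T : ℝ)|) with hG
  -- split
  have hsplit : Dfull ⊆ D1 ∪ D2 := by
    intro ω hω
    rw [hDfull, Finset.mem_filter] at hω
    rcases hω.2 with ⟨t, htM', hdev⟩
    rw [Finset.mem_union, hD1, hD2, Finset.mem_filter, Finset.mem_filter]
    rcases le_or_gt t T with h | h
    · exact Or.inl ⟨Finset.mem_univ _, t, h, hdev⟩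
    · exact Or.inr ⟨Finset.mem_univ _, t, h, htM', hdev⟩
  -- first piece
  have hD1le : D1.card ≤ 2 * G.card := by
    refine le_trans (Finset.card_le_card ?_) (maximal hM0 le_rfl hTM3 hx hx2)
    intro ω hω
    rw [hD1, Finset.mem_filter] at hω
    rcases hω.2 with ⟨t, htT, hdev⟩
    rw [Finset.mem_filter]
    refine ⟨Finset.mem_univ _, t, htT, ?_⟩
    rw [bad, abs_sub_comm]
    calc x < -((cnt M t ω : ℝ) - t) := by linarith
      _ ≤ |(t : ℝ) - (cnt M t ω : ℝ)| := by
          rw [neg_sub]; exact le_abs_self _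
  -- second piece
  have hD2le : D2.card ≤ 2 * G.card := by
    refine le_trans flip_bound ?_
    refine le_trans (Finset.card_le_card ?_) (maximal hM0 hU2 hTM3 hx hx2)
    intro ω hω
    rw [Finset.mem_filter] at hω
    rcases hω.2 with ⟨u, huU, hdev⟩
    rw [Finset.mem_filter]
    refine ⟨Finset.mem_univ _, u, huU, ?_⟩
    rw [bad]
    exact lt_of_lt_of_le hdev (le_abs_self _)
  -- global bound on G
  have hx2' : (0:ℝ) < x ^ 2 := by positivity
  have hGle : (G.card : ℝ) ≤ 16 * ((M : ℝ))^M * M / x ^ 2 := by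
    have hch := global_cheb hM0 hTM (a := x / 4) (by linarith)
    have hsub : G ⊆ Finset.univ.filter
        (fun ω : Fin M → Fin M => x / 4 ≤ |(cnt M T ω : ℝ) - (T : ℝ)|) := by
      rw [hG]
      apply Finset.monotone_filter_right
      intro ω _ hω
      exact le_of_lt hω
    have hcard : (G.card : ℝ) ≤ ((Finset.univ.filter
        (fun ω : Fin M → Fin M => x / 4 ≤ |(cnt M T ω : ℝ) - (T : ℝ)|)).card : ℝ) := by
      exact_mod_cast Finset.card_le_card hsub
    rw [le_div_iff₀ hx2']
    rw [div_pow] at hch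
    nlinarith [mul_le_mul_of_nonneg_right hcard (le_of_lt hx2')]
  -- assemble
  have hcards : (Dfull.card : ℝ) ≤ 4 * G.card := by
    have h1 : Dfull.card ≤ D1.card + D2.card :=
      le_trans (Finset.card_le_card hsplit) (Finset.card_union_le _ _)
    have : Dfull.card ≤ 4 * G.card := by omega
    exact_mod_cast this
  rw [minBelow_count]
  have hMM : (0:ℝ) < ((M:ℝ))^M := by positivity
  calc ((M : ℝ))⁻¹ ^ M * (Dfull.card : ℝ)
      ≤ ((M : ℝ))⁻¹ ^ M * (4 * G.card) := by
        apply mul_le_mul_of_nonneg_left hcards (by positivity)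
    _ ≤ ((M : ℝ))⁻¹ ^ M * (4 * (16 * ((M : ℝ))^M * M / x ^ 2)) := by
        apply mul_le_mul_of_nonneg_left _ (by positivity)
        linarith
    _ = 64 * M / x ^ 2 := by
        rw [inv_pow]
        field_simp
        ring


end BallsWalkAux

/-- Proposition `middle`: if `M = M(n) → ∞` and `s = s(n) → ∞`,
then `Pr[MIN < -s√M] → 0`. -/
theorem middle_min (M : ℕ → ℕ) (s : ℕ → ℝ)
    (hM : Tendsto M atTop atTop) (hs : Tendsto s atTop atTop) :
    Tendsto (fun n : ℕ => minBelowProb (M n) (s n * Real.sqrt (M n)))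
      atTop (𝓝 0) := by
  have hs2 : Tendsto (fun n => (s n) ^ 2) atTop atTop := by
    have := Filter.Tendsto.atTop_mul_atTop₀ hs hs
    simpa [sq] using this
  have hg : Tendsto (fun n => 64 / (s n) ^ 2) atTop (𝓝 0) :=
    Filter.Tendsto.div_atTop tendsto_const_nhds hs2
  apply squeeze_zero' ?_ ?_ hg
  · filter_upwards [hM.eventually_ge_atTop 2] with n hn
    rw [BallsWalkAux.minBelow_count]
    positivity
  · filter_upwards [hM.eventually_ge_atTop 2, hs.eventually_ge_atTop 17] with n hMn hsn
    have hMpos : (0:ℝ) < (M n : ℝ) := by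
      have : (0:ℕ) < M n := by omega
      exact_mod_cast this
    have hx : 0 < s n * Real.sqrt (M n) := by
      apply mul_pos (by linarith)
      exact Real.sqrt_pos.mpr hMpos
    have hxsq : (s n * Real.sqrt (M n)) ^ 2 = (s n) ^ 2 * (M n : ℝ) := by
      rw [mul_pow, Real.sq_sqrt hMpos.le]
    have hx2 : 288 * ((M n : ℝ)) ≤ (s n * Real.sqrt (M n)) ^ 2 := by
      rw [hxsq]
      have h289 : (289:ℝ) ≤ (s n)^2 := by nlinarith
      nlinarith
    calc minBelowProb (M n) (s n * Real.sqrt (M n))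
        ≤ 64 * (M n) / (s n * Real.sqrt (M n)) ^ 2 :=
          BallsWalkAux.master hMn hx hx2
      _ = 64 / (s n) ^ 2 := by
          rw [hxsq]
          rw [div_eq_div_iff (by positivity) (by positivity)]
          ring
end

section
/- Fix an integer k ≥ 2 and positive reals λ_1, …, λ_k with Σ_{i=1}^k λ_i = k - 1. Under the law P₀*, the bin counts Z_1, …, Z_k are independent with Z_i ~ Po(λ_i); for t ∈ ℝ, under the law P_t* they are independent with Z_i ~ Po(λ_{i,t}) where λ_{i,t} = λ_i·e^{t(i-k/2)}. Let TREE be the event that Z_1 + … + Z_j ≥ j for all 1 ≤ j ≤ k-1 and Z_1 + … + Z_k = k-1, let M = C(k,2) - Σ_{i=1}^k i·Z_i, and let E*[M] = C(k,2) - Σ_{i=1}^k i·λ_i. Then, provided P₀*[TREE] > 0, E₀*[e^{-t(M - E*[M])} | TREE] = exp(Σ_{i=1}^k λ_i·[e^{t(i-k/2)} - 1 - t(i-k/2)]) · P_t*[TREE]/P₀*[TREE]. -/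
open Filter Topology Real Finset

/-- The event TREE for bin counts `z : Fin k → ℕ` (bin `i+1` holds `z i` balls):
`Z_1 + ⋯ + Z_j ≥ j` for all `1 ≤ j ≤ k-1`, and `Z_1 + ⋯ + Z_k = k-1`. -/
def TREEz (k : ℕ) (z : Fin k → ℕ) : Prop :=
  (∀ j, 1 ≤ j → j ≤ k - 1 →
      j ≤ ∑ i ∈ Finset.univ.filter (fun i : Fin k => (i : ℕ) < j), z i) ∧
    ∑ i, z i = k - 1

/-- `M = C(k,2) - ∑_{i=1}^k i Z_i`. -/
noncomputable def Mz (k : ℕ) (z : Fin k → ℕ) : ℝ :=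
  (Nat.choose k 2 : ℝ) - ∑ i : Fin k, (((i : ℕ) + 1 : ℝ)) * z i

/-- `E*[M] = C(k,2) - ∑_{i=1}^k i λ_i`. -/
noncomputable def EMz (k : ℕ) (lam : Fin k → ℝ) : ℝ :=
  (Nat.choose k 2 : ℝ) - ∑ i : Fin k, (((i : ℕ) + 1 : ℝ)) * lam i

/-- `P_t*[TREE]`, where under `P_t*` the counts `Z_i` are independent with
`Z_i ∼ Po(λ_{i,t})`, `λ_{i,t} = λ_i e^{t(i - k/2)}`. -/
noncomputable def PtTREE (k : ℕ) (lam : Fin k → ℝ) (t : ℝ) : ℝ :=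
  ∑' z : Fin k → ℕ,
    (∏ i : Fin k, poissonP (lam i * Real.exp (t * (((i : ℕ) + 1 : ℝ) - k / 2))) (z i)) *
      ind (TREEz k z)

/-! Exponential tilting: `Po(λ e^u)(n) = Po(λ)(n) · e^{λ - λ e^u + n u}`, so the `P_t*`-weight of a
configuration `z` is its `P₀*`-weight times `exp (∑ λ_i (1 - e^{t c_i}) + t ∑ c_i z_i)` with
`c_i = i - k/2`. On TREE, `∑ z_i = k - 1 = ∑ λ_i`, so the centring `k/2` drops out of
`t ∑ c_i (z_i - λ_i)`, which is then exactly `-t (M - E*[M])`. -/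

lemma poissonP_mul_exp (l u : ℝ) (n : ℕ) :
    poissonP (l * exp u) n = poissonP l n * exp (l - l * exp u + n * u) := by
  have split : exp (-(l * exp u)) = exp (-l) * exp (l - l * exp u) := by
    rw [← exp_add]; ring_nf
  unfold poissonP
  rw [mul_pow, ← exp_nat_mul, split, exp_add]
  ring

lemma prod_poissonP_mul_exp {ι : Type*} [Fintype ι] (lam c : ι → ℝ) (z : ι → ℕ) :
    ∏ i, poissonP (lam i * exp (c i)) (z i) =
      (∏ i, poissonP (lam i) (z i)) * exp (∑ i, (lam i - lam i * exp (c i) + z i * c i)) := by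
  simp_rw [poissonP_mul_exp, prod_mul_distrib, exp_sum]

lemma sum_tilt_exponent {ι : Type*} [Fintype ι] (lam c : ι → ℝ) (z : ι → ℕ) :
    ∑ i, lam i * (exp (c i) - 1 - c i) + ∑ i, (lam i - lam i * exp (c i) + z i * c i) =
      ∑ i, c i * (z i - lam i) := by
  rw [← sum_add_distrib]
  exact sum_congr rfl fun i _ => by ring

lemma sum_sub_const_mul_sub_of_sum_eq {ι : Type*} [Fintype ι] (a x y : ι → ℝ) (m : ℝ)
    (hxy : ∑ i, x i = ∑ i, y i) :
    ∑ i, (a i - m) * (x i - y i) = ∑ i, a i * (x i - y i) := by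
  simp only [sub_mul, sum_sub_distrib, ← mul_sum, hxy, sub_self, mul_zero, sub_zero]

lemma neg_mul_Mz_sub_EMz (k : ℕ) (z : Fin k → ℕ) (lam : Fin k → ℝ) (t : ℝ)
    (hz : ∑ i, (z i : ℝ) = ∑ i, lam i) :
    -(t * (Mz k z - EMz k lam)) =
      ∑ i : Fin k, t * (((i : ℕ) + 1 : ℝ) - k / 2) * (z i - lam i) := by
  calc -(t * (Mz k z - EMz k lam))
      = t * ∑ i : Fin k, ((i : ℕ) + 1 : ℝ) * (z i - lam i) := by
        simp only [Mz, EMz, mul_sub, sum_sub_distrib]; ring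
    _ = t * ∑ i : Fin k, (((i : ℕ) + 1 : ℝ) - k / 2) * (z i - lam i) := by
        rw [sum_sub_const_mul_sub_of_sum_eq _ _ _ _ hz]
    _ = _ := by simp only [mul_sum, mul_assoc]

lemma TREEz.sum_cast {k : ℕ} {z : Fin k → ℕ} (hz : TREEz k z) (hk : 1 ≤ k) :
    ∑ i, (z i : ℝ) = k - 1 := by
  rw [← Nat.cast_sum, hz.2, Nat.cast_sub hk, Nat.cast_one]

theorem tilted_mgf_identity_general (k : ℕ) (hk : 2 ≤ k) (lam : Fin k → ℝ)
    (hsum : ∑ i, lam i = (k : ℝ) - 1) (t : ℝ) :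
    (∑' z : Fin k → ℕ,
        (∏ i : Fin k, poissonP (lam i) (z i)) * ind (TREEz k z) *
          Real.exp (-(t * (Mz k z - EMz k lam)))) / PtTREE k lam 0 =
      Real.exp (∑ i : Fin k,
          lam i * (Real.exp (t * (((i : ℕ) + 1 : ℝ) - k / 2)) - 1 -
            t * (((i : ℕ) + 1 : ℝ) - k / 2))) *
        PtTREE k lam t / PtTREE k lam 0 := by
  congr 1
  rw [PtTREE, ← tsum_mul_left]
  refine tsum_congr fun z => ?_
  by_cases hz : TREEz k z
  · have hzlam : ∑ i, (z i : ℝ) = ∑ i, lam i := by rw [hz.sum_cast (by omega), hsum]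
    rw [ind, if_pos hz, mul_one, mul_one, prod_poissonP_mul_exp, neg_mul_Mz_sub_EMz _ _ _ _ hzlam,
      ← sum_tilt_exponent, exp_add]
    ring
  · simp [ind, hz]

/-- Proposition `prop-totid`: fix `k ≥ 2` and positive
`λ_1, …, λ_k` with `∑ λ_i = k - 1`.  Then, provided `P₀*[TREE] > 0`, for every
`t ∈ ℝ`,
`E₀*[e^{-t(M - E*[M])} | TREE]
  = exp(∑_i λ_i [e^{t(i-k/2)} - 1 - t(i-k/2)]) · P_t*[TREE]/P₀*[TREE]`. -/
theorem tilted_mgf_identity (k : ℕ) (hk : 2 ≤ k) (lam : Fin k → ℝ)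
    (hpos : ∀ i, 0 < lam i) (hsum : ∑ i, lam i = (k : ℝ) - 1) (t : ℝ)
    (hTree : 0 < PtTREE k lam 0) :
    (∑' z : Fin k → ℕ,
        (∏ i : Fin k, poissonP (lam i) (z i)) * ind (TREEz k z) *
          Real.exp (-(t * (Mz k z - EMz k lam)))) / PtTREE k lam 0 =
      Real.exp (∑ i : Fin k,
          lam i * (Real.exp (t * (((i : ℕ) + 1 : ℝ) - k / 2)) - 1 -
            t * (((i : ℕ) + 1 : ℝ) - k / 2))) *
        PtTREE k lam t / PtTREE k lam 0 :=
  tilted_mgf_identity_general k hk lam hsum t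
end
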